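/- arXiv:1912.05893 — 11 statements merged into one kernel-verified Lean document; each statement's English description precedes it below -/
import Mathlib

section
/- Let h ∈ ℤ[x] with h(0) odd and g ≥ 1. Then the polynomial f(x) = x^(2g+1) + h(x)^2 is squarefree over 𝔽₂ (i.e., its reduction mod 2 is squarefree), and hence f is squarefree over ℚ and its discriminant is odd. -/
/-!
Modulo 2 the derivative of `f = X ^ (2g+1) + h ^ 2` is `X ^ (2g)`, while `f(0) = h(0) ^ 2` is odd;
so `f mod 2` is coprime to its derivative, i.e. separable, hence squarefree.

The discriminant of the power basis of `R[X]/(f)` commutes with reduction of coefficients. Over a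
splitting field, a separable `p = ∏ (X - rᵢ)` gives `K[X]/(p) ≅ Kⁿ` by evaluation at the roots,
which turns that discriminant into the square of the Vandermonde determinant of the `rᵢ`. Hence the
discriminant of `f` is nonzero mod 2, i.e. odd. Over `ℚ` it is then nonzero, so the trace form of
`ℚ[X]/(f)` is nondegenerate; as it vanishes on nilpotents, `ℚ[X]/(f)` is reduced and `f` is
squarefree.
-/

open Polynomial Matrix

theorem Algebra.trace_pi_self {K ι : Type*} [Field K] [Fintype ι] (x : ι → K) :
    Algebra.trace K (ι → K) x = ∑ i, x i := by
  classical
  rw [Algebra.trace_eq_matrix_trace (Pi.basisFun K ι)]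
  simp [Matrix.trace, Algebra.leftMulMatrix_eq_repr_mul]

namespace AdjoinRoot

theorem trace_mk {R : Type*} [CommRing R] {f : R[X]} (hf : f.Monic) (q : R[X]) :
    Algebra.trace R (AdjoinRoot f) (mk f q) =
      ∑ i ∈ Finset.range f.natDegree, ((q * X ^ i) %ₘ f).coeff i := by
  classical
  rw [Algebra.trace_eq_matrix_trace (powerBasis' hf).basis, Matrix.trace,
    ← Fin.sum_univ_eq_sum_range]
  refine Finset.sum_congr rfl fun i _ => ?_
  rw [diag_apply, Algebra.leftMulMatrix_eq_repr_mul, PowerBasis.basis_eq_pow, powerBasis'_gen,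
    ← mk_X, ← map_pow, ← map_mul]
  -- coordinates in `powerBasis'` are the coefficients of the remainder modulo `f`
  rfl

theorem map_trace_mk {R S : Type*} [CommRing R] [CommRing S] [Nontrivial S] (φ : R →+* S)
    {f : R[X]} (hf : f.Monic) (q : R[X]) :
    φ (Algebra.trace R (AdjoinRoot f) (mk f q)) =
      Algebra.trace S (AdjoinRoot (f.map φ)) (mk (f.map φ) (q.map φ)) := by
  rw [trace_mk hf, trace_mk (hf.map φ), hf.natDegree_map φ, map_sum]
  refine Finset.sum_congr rfl fun i _ => ?_
  rw [← coeff_map, map_modByMonic _ hf, Polynomial.map_mul, Polynomial.map_pow, map_X]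

theorem map_discr_pow_root {R S : Type*} [CommRing R] [CommRing S] [Nontrivial S] (φ : R →+* S)
    {f : R[X]} (hf : f.Monic) (n : ℕ) :
    φ (Algebra.discr R (fun i : Fin n => root f ^ (i : ℕ))) =
      Algebra.discr S (fun i : Fin n => root (f.map φ) ^ (i : ℕ)) := by
  rw [Algebra.discr_def, Algebra.discr_def, RingHom.map_det]
  congr 1
  ext i j
  simp only [RingHom.mapMatrix_apply, map_apply, Algebra.traceMatrix_apply,
    Algebra.traceForm_apply, ← mk_X, ← map_pow, ← map_mul, map_trace_mk φ hf, Polynomial.map_mul,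
    Polynomial.map_pow, map_X]

section EvalRoots

variable {K ι : Type*} [Field K] [Fintype ι]

noncomputable def evalRoots (r : ι → K) : AdjoinRoot (∏ i, (X - C (r i))) →ₐ[K] ι → K :=
  AlgHom.pi fun i => liftAlgHom _ (Algebra.ofId K K) (r i) <| by
    simpa [eval₂_finsetProd] using Finset.prod_eq_zero (Finset.mem_univ i) (sub_self _)

@[simp]
theorem evalRoots_mk (r : ι → K) (q : K[X]) : evalRoots r (mk _ q) = fun i => q.eval (r i) := by
  ext i
  simp [evalRoots, liftAlgHom_mk]

theorem evalRoots_root (r : ι → K) : evalRoots r (root _) = r := by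
  rw [← mk_X, evalRoots_mk]
  simp

theorem evalRoots_injective {r : ι → K} (hr : Function.Injective r) :
    Function.Injective (evalRoots r) := by
  classical
  refine (injective_iff_map_eq_zero _).mpr fun x hx => ?_
  obtain ⟨q, rfl⟩ := mk_surjective x
  refine mk_eq_zero.mpr <| Finset.prod_dvd_of_coprime
    ((pairwise_coprime_X_sub_C hr).set_pairwise _) fun i _ => dvd_iff_isRoot.mpr ?_
  simpa using congr_fun hx i

theorem evalRoots_bijective {r : ι → K} (hr : Function.Injective r) :
    Function.Bijective (evalRoots r) := by
  have hp : (∏ i, (X - C (r i))) ≠ 0 :=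
    (monic_prod_of_monic _ _ fun i _ => monic_X_sub_C (r i)).ne_zero
  have := (powerBasis hp).finite
  refine ⟨evalRoots_injective hr, (LinearMap.injective_iff_surjective_of_finrank_eq_finrank ?_
    (f := (evalRoots r).toLinearMap)).mp (evalRoots_injective hr)⟩
  rw [(powerBasis hp).finrank, powerBasis_dim, Module.finrank_fintype_fun_eq_card,
    natDegree_finsetProd_X_sub_C_eq_card, Finset.card_univ]

end EvalRoots

theorem discr_pow_root_prod_X_sub_C {K : Type*} [Field K] {n : ℕ} {r : Fin n → K}
    (hr : Function.Injective r) :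
    Algebra.discr K (fun i : Fin n => root (∏ j, (X - C (r j))) ^ (i : ℕ)) =
      (vandermonde r).det ^ 2 := by
  have htrace : Algebra.traceMatrix K (fun i : Fin n => r ^ (i : ℕ)) =
      (vandermonde r)ᵀ * vandermonde r := by
    ext i j
    simp [Algebra.traceMatrix_apply, Algebra.trace_pi_self, mul_apply]
  rw [Algebra.discr_eq_discr_of_algEquiv _ (AlgEquiv.ofBijective _ (evalRoots_bijective hr)),
    Algebra.discr_def]
  simp [Function.comp_def, evalRoots_root, htrace, det_mul, sq]

end AdjoinRoot

theorem Polynomial.Splits.exists_injective_eq_prod {K : Type*} [Field K] {p : K[X]}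
    (hsplit : p.Splits) (hm : p.Monic) (hs : p.Separable) :
    ∃ r : Fin p.natDegree → K, Function.Injective r ∧ p = ∏ i, (X - C (r i)) := by
  set l := p.roots.toList
  have hlen : l.length = p.natDegree := by
    rw [Multiset.length_toList, ← splits_iff_card_roots.mp hsplit]
  rw [← hlen]
  refine ⟨fun i => l[(i : ℕ)], List.nodup_iff_injective_getElem.mp ?_, ?_⟩
  · exact Multiset.coe_nodup.mp (by simpa [l] using nodup_roots hs)
  · rw [Fin.prod_univ_fun_getElem l fun a => X - C a, ← Multiset.prod_coe, ← Multiset.map_coe,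
      Multiset.coe_toList]
    exact hsplit.eq_prod_roots_of_monic hm

theorem AdjoinRoot.discr_pow_root_ne_zero_of_separable {K : Type*} [Field K] {p : K[X]}
    (hm : p.Monic) (hs : p.Separable) :
    Algebra.discr K (fun i : Fin p.natDegree => root p ^ (i : ℕ)) ≠ 0 := by
  let φ := algebraMap K p.SplittingField
  obtain ⟨r, hr, hprod⟩ := (SplittingField.splits p).exists_injective_eq_prod (hm.map φ) hs.map
  intro h0
  have hdiscr := map_discr_pow_root φ hm p.natDegree
  rw [h0, map_zero, hprod, ← hm.natDegree_map φ, discr_pow_root_prod_X_sub_C hr] at hdiscr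
  exact pow_ne_zero 2 (det_vandermonde_ne_zero_iff.mpr hr) hdiscr.symm

theorem Algebra.isReduced_of_discr_ne_zero {K A ι : Type*} [Field K] [CommRing A] [Algebra K A]
    [Fintype ι] [DecidableEq ι] (b : Module.Basis ι K A) (hb : Algebra.discr K b ≠ 0) :
    IsReduced A := by
  have hnd : (Algebra.traceForm K A).Nondegenerate := by
    rwa [LinearMap.BilinForm.nondegenerate_iff_det_ne_zero b, ← Algebra.traceMatrix_of_basis]
  refine ⟨fun x hx => hnd.1 x fun y => ?_⟩
  exact (isNilpotent_trace_of_isNilpotent ((Commute.all x y).isNilpotent_mul_right hx)).eq_zero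

theorem AdjoinRoot.squarefree_of_isReduced {R : Type*} [CommRing R] [IsDomain R] {p : R[X]}
    (hp : p ≠ 0) [IsReduced (AdjoinRoot p)] : Squarefree p := by
  rintro d ⟨e, rfl⟩
  have hde : mk (d * d * e) (d * e) = 0 := by
    refine IsNilpotent.eq_zero ⟨2, ?_⟩
    rw [← map_pow, mk_eq_zero]
    exact ⟨e, by ring⟩
  have hde0 : d * e ≠ 0 := by rintro h; exact hp (by rw [mul_assoc, h, mul_zero])
  rw [mk_eq_zero, mul_assoc] at hde
  exact isUnit_of_dvd_one ((mul_dvd_mul_iff_right hde0).mp (by rwa [one_mul]))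

theorem AdjoinRoot.squarefree_of_discr_pow_root_ne_zero {K : Type*} [Field K] {p : K[X]}
    (hp : p ≠ 0) (hd : Algebra.discr K (fun i : Fin p.natDegree => root p ^ (i : ℕ)) ≠ 0) :
    Squarefree p := by
  have : IsReduced (AdjoinRoot p) := Algebra.isReduced_of_discr_ne_zero (powerBasis hp).basis
    (by rwa [PowerBasis.coe_basis, powerBasis_gen])
  exact squarefree_of_isReduced hp

theorem Polynomial.separable_X_pow_add_sq {K : Type*} [Field K] [CharP K 2] (g : ℕ) {q : K[X]}
    (hq : q.eval 0 ≠ 0) : (X ^ (2 * g + 1) + q ^ 2).Separable := by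
  have hder : derivative (X ^ (2 * g + 1) + q ^ 2) = X ^ (2 * g) := by
    simp [derivative_pow, CharTwo.two_eq_zero]
  rw [separable_def, hder]
  refine IsCoprime.pow_right ((prime_X.coprime_iff_not_dvd.mpr fun h => hq ?_).symm)
  simpa [X_dvd_iff, coeff_zero_eq_eval_zero] using h

theorem Polynomial.degree_sq_lt_of_natDegree_le {R : Type*} [Semiring R] {h : R[X]} {g : ℕ}
    (hdeg : h.natDegree ≤ g) : (h ^ 2).degree < ↑(2 * g + 1) :=
  (degree_le_of_natDegree_le (natDegree_pow_le.trans (Nat.mul_le_mul_left 2 hdeg))).trans_lt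
    (by exact_mod_cast Nat.lt_succ_self _)

theorem stmt_0_general (g : ℕ) (h : Polynomial ℤ)
    (hdeg : h.natDegree ≤ g) (hodd : Odd (h.eval 0))
    (f : Polynomial ℤ) (hf : f = X ^ (2 * g + 1) + h ^ 2) :
    Squarefree (f.map (Int.castRingHom (ZMod 2))) ∧
    Squarefree (f.map (Int.castRingHom ℚ)) ∧
    Odd (Algebra.discr ℤ (fun i : Fin (2 * g + 1) => AdjoinRoot.root f ^ (i : ℕ))) := by
  set φ := Int.castRingHom (ZMod 2)
  have hlt := degree_sq_lt_of_natDegree_le hdeg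
  have hmonic : f.Monic := hf ▸ monic_X_pow_add hlt
  have hnat : f.natDegree = 2 * g + 1 := by
    rw [hf, natDegree_add_eq_left_of_degree_lt (by rwa [degree_X_pow]), natDegree_X_pow]
  have hsep : (f.map φ).Separable := by
    rw [hf, Polynomial.map_add, Polynomial.map_pow, Polynomial.map_pow, map_X]
    refine separable_X_pow_add_sq g ?_
    rw [eval_map, eval₂_at_zero, eq_intCast, Ne, ZMod.intCast_eq_zero_iff_even,
      Int.not_even_iff_odd, coeff_zero_eq_eval_zero]
    exact hodd
  have hdiscr :
      Odd (Algebra.discr ℤ (fun i : Fin (2 * g + 1) => AdjoinRoot.root f ^ (i : ℕ))) := by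
    rw [← Int.not_even_iff_odd, ← ZMod.intCast_eq_zero_iff_even, ← eq_intCast φ,
      AdjoinRoot.map_discr_pow_root φ hmonic, ← hnat, ← hmonic.natDegree_map φ]
    exact AdjoinRoot.discr_pow_root_ne_zero_of_separable (hmonic.map φ) hsep
  refine ⟨hsep.squarefree,
    AdjoinRoot.squarefree_of_discr_pow_root_ne_zero (hmonic.map _).ne_zero ?_, hdiscr⟩
  rw [hmonic.natDegree_map, hnat, ← AdjoinRoot.map_discr_pow_root _ hmonic, eq_intCast,
    Int.cast_ne_zero]
  exact fun h0 => by simp [h0] at hdiscr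

theorem stmt_0 (g : ℕ) (hg : 1 ≤ g) (h : Polynomial ℤ)
    (hdeg : h.natDegree ≤ g) (hodd : Odd (h.eval 0))
    (f : Polynomial ℤ) (hf : f = X ^ (2 * g + 1) + h ^ 2) :
    Squarefree (f.map (Int.castRingHom (ZMod 2))) ∧
    Squarefree (f.map (Int.castRingHom ℚ)) ∧
    Odd (Algebra.discr ℤ (fun i : Fin (2 * g + 1) => AdjoinRoot.root f ^ (i : ℕ))) :=
  stmt_0_general g h hdeg hodd f hf
end

section
/- There is a sequence (B_n)_{n≥1} of monic polynomials B_n ∈ ℤ[c] such that A_n(c) = ∏_{d | n} B_d(c) for all n ≥ 1, where A_1(c) = c and A_{n+1}(c) = A_n(c)^2 + c. -/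
/-!
`A_n = f_c^n(0)` for `f_c(z) = z² + c`. Since `x - y ∣ f_c x - f_c y`, `A_n` is a strong
divisibility sequence: `A_d ∣ A_n` for `d ∣ n`, and a common divisor of `A_m` and `A_n` divides
`A_{gcd(m, n)}`. Modulo `2` the derivative of `A_n` is `1`, so `A_n` is squarefree.

Define `B_n` recursively as the quotient of `A_n` by `∏_{d ∣ n, d < n} B_d`. A common factor
`q` of `B_m` and `B_n` (`m < n`) divides `A_{gcd(m, n)}`, and `A_{gcd(m, n)} B_n ∣ A_n`, so
`q² ∣ A_n`. Hence the `B_d` are pairwise coprime, their product over the proper divisors of `n`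
divides `A_n`, and the quotient is exact and monic.
-/

open Polynomial Function

section Iterate

variable {R : Type*} [CommRing R] {f : R → R}

theorem sub_dvd_iterate_sub (hf : ∀ x y, x - y ∣ f x - f y) (k : ℕ) (x y : R) :
    x - y ∣ f^[k] x - f^[k] y := by
  induction k with
  | zero => simp
  | succ k ih =>
    rw [Function.iterate_succ_apply', Function.iterate_succ_apply']
    exact ih.trans (hf _ _)

theorem iterate_zero_dvd_iterate_add_sub (hf : ∀ x y, x - y ∣ f x - f y) (m k : ℕ) :
    f^[m] 0 ∣ f^[k + m] 0 - f^[k] 0 := by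
  simpa [Function.iterate_add_apply] using sub_dvd_iterate_sub hf k (f^[m] 0) 0

theorem isDvdSequence_iterate_zero (hf : ∀ x y, x - y ∣ f x - f y) :
    IsDvdSequence (f^[·] 0) := by
  rintro m _ ⟨t, rfl⟩
  induction t with
  | zero => simp
  | succ t ih =>
    rw [Nat.mul_succ]
    exact (dvd_sub_left ih).1 (iterate_zero_dvd_iterate_add_sub hf m (m * t))

theorem dvd_iterate_zero_gcd (hf : ∀ x y, x - y ∣ f x - f y) {q : R} {m n : ℕ} :
    q ∣ f^[m] 0 → q ∣ f^[n] 0 → q ∣ f^[m.gcd n] 0 := by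
  induction m, n using Nat.gcd.induction with
  | H0 n => intro _ h; simpa using h
  | H1 m n _ ih =>
    intro hqm hqn
    rw [Nat.gcd_rec]
    refine ih ?_ hqm
    have hq : q ∣ f^[m * (n / m)] 0 :=
      hqm.trans (isDvdSequence_iterate_zero hf _ _ (dvd_mul_right m _))
    have hsub := iterate_zero_dvd_iterate_add_sub hf (m * (n / m)) (n % m)
    rw [Nat.mod_add_div] at hsub
    simpa using dvd_sub hqn (hq.trans hsub)

end Iterate

theorem Polynomial.Monic.squarefree_of_map {R S : Type*} [CommRing R] [IsDomain R] [CommRing S]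
    [IsDomain S] (φ : R →+* S) {p : R[X]} (hp : p.Monic) (h : Squarefree (p.map φ)) :
    Squarefree p := by
  intro q hq
  by_contra hu
  have hdvd : q ∣ p := (dvd_mul_right q q).trans hq
  have hdeg := natDegree_pos_iff_degree_pos.2 (degree_pos_of_not_isUnit_of_dvd_monic hp hu hdvd)
  have hmap : IsUnit (q.map φ) := h _ (by simpa only [Polynomial.map_mul] using map_dvd φ hq)
  rw [← natDegree_map_eq_of_isUnit_leadingCoeff φ (hp.isUnit_leadingCoeff_of_dvd hdvd),
    natDegree_eq_zero_of_isUnit hmap] at hdeg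
  exact hdeg.false

section PrimitiveFactor

variable {R : Type*} [CommRing R]

/-- The paper's `B_n` when `a = A`. -/
noncomputable def primitiveFactor (a : ℕ → R[X]) (n : ℕ) : R[X] :=
  a n /ₘ ∏ d ∈ n.properDivisors.attach, primitiveFactor a d
termination_by n
decreasing_by exact (Nat.mem_properDivisors.mp d.2).2

variable {a : ℕ → R[X]}

theorem primitiveFactor_eq (a : ℕ → R[X]) (n : ℕ) :
    primitiveFactor a n = a n /ₘ ∏ d ∈ n.properDivisors, primitiveFactor a d := by
  rw [primitiveFactor, Finset.prod_attach n.properDivisors (primitiveFactor a)]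

theorem prod_properDivisors_mul_primitiveFactor {n : ℕ}
    (hmonic : (∏ d ∈ n.properDivisors, primitiveFactor a d).Monic)
    (hdvd : ∏ d ∈ n.properDivisors, primitiveFactor a d ∣ a n) :
    (∏ d ∈ n.properDivisors, primitiveFactor a d) * primitiveFactor a n = a n := by
  obtain ⟨c, hc⟩ := hdvd
  rw [primitiveFactor_eq, hc, mul_divByMonic_cancel_left c hmonic]

theorem prod_divisors_primitiveFactor {n : ℕ} (hn : n ≠ 0) :
    ∏ d ∈ n.divisors, primitiveFactor a d =
      (∏ d ∈ n.properDivisors, primitiveFactor a d) * primitiveFactor a n := by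
  rw [← Nat.cons_self_properDivisors hn, Finset.prod_cons, mul_comm]

theorem primitiveFactor_dvd_of_prod_divisors_eq {n : ℕ} (hn : n ≠ 0)
    (hprod : ∏ d ∈ n.divisors, primitiveFactor a d = a n) : primitiveFactor a n ∣ a n :=
  hprod ▸ Finset.dvd_prod_of_mem _ (Nat.mem_divisors_self n hn)

theorem isRelPrime_primitiveFactor [DecompositionMonoid R[X]]
    (hgcd : ∀ q m n, q ∣ a m → q ∣ a n → q ∣ a (m.gcd n))
    (hsquarefree : ∀ n, 0 < n → Squarefree (a n)) {m n : ℕ} (hm : 0 < m) (hmn : m < n)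
    (hprod : ∀ d, 0 < d → d ≤ n → ∏ e ∈ d.divisors, primitiveFactor a e = a d) :
    IsRelPrime (primitiveFactor a m) (primitiveFactor a n) := by
  have hn : 0 < n := hm.trans hmn
  have hg : 0 < m.gcd n := Nat.gcd_pos_of_pos_left n hm
  have hgn : m.gcd n < n := (Nat.gcd_le_left n hm).trans_lt hmn
  have hsplit : a (m.gcd n) * primitiveFactor a n ∣ a n := by
    rw [← hprod _ hg hgn.le, ← hprod n hn le_rfl, prod_divisors_primitiveFactor hn.ne']
    exact mul_dvd_mul_right (Finset.prod_dvd_prod_of_subset _ _ _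
      (Nat.divisors_subset_properDivisors hn.ne' (Nat.gcd_dvd_right m n) hgn.ne)) _
  intro q hqm hqn
  exact IsRelPrime.of_squarefree_mul ((hsquarefree n hn).squarefree_of_dvd hsplit)
    (hgcd q m n (hqm.trans (primitiveFactor_dvd_of_prod_divisors_eq hm.ne' (hprod m hm hmn.le)))
      (hqn.trans (primitiveFactor_dvd_of_prod_divisors_eq hn.ne' (hprod n hn le_rfl)))) hqn

theorem monic_primitiveFactor_and_prod_divisors [DecompositionMonoid R[X]]
    (hmonic : ∀ n, 0 < n → (a n).Monic) (hdvd : IsDvdSequence a)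
    (hgcd : ∀ q m n, q ∣ a m → q ∣ a n → q ∣ a (m.gcd n))
    (hsquarefree : ∀ n, 0 < n → Squarefree (a n)) (n : ℕ) (hn : 0 < n) :
    (primitiveFactor a n).Monic ∧ ∏ d ∈ n.divisors, primitiveFactor a d = a n := by
  induction n using Nat.strong_induction_on with
  | _ n ih =>
  have hproper : ∀ d ∈ n.properDivisors, 0 < d ∧ d < n := fun d hd =>
    ⟨Nat.pos_of_mem_properDivisors hd, (Nat.mem_properDivisors.1 hd).2⟩
  have hP : (∏ d ∈ n.properDivisors, primitiveFactor a d).Monic :=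
    monic_prod_of_monic _ _ fun d hd => (ih d (hproper d hd).2 (hproper d hd).1).1
  have hcoprime : (n.properDivisors : Set ℕ).Pairwise (IsRelPrime on primitiveFactor a) := by
    have key : ∀ x y, 0 < x → x < y → y < n →
        IsRelPrime (primitiveFactor a x) (primitiveFactor a y) := fun x y hx hxy hy =>
      isRelPrime_primitiveFactor hgcd hsquarefree hx hxy fun d hd hdy =>
        (ih d (hdy.trans_lt hy) hd).2
    intro x hx y hy hxy
    rcases hxy.lt_or_gt with h | h
    · exact key x y (hproper x hx).1 h (hproper y hy).2
    · exact (key y x (hproper y hy).1 h (hproper x hx).2).symm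
  have hPdvd : ∏ d ∈ n.properDivisors, primitiveFactor a d ∣ a n :=
    Finset.prod_dvd_of_isRelPrime hcoprime fun d hd =>
      (primitiveFactor_dvd_of_prod_divisors_eq (hproper d hd).1.ne'
        (ih d (hproper d hd).2 (hproper d hd).1).2).trans
        (hdvd d n (Nat.mem_properDivisors.1 hd).1)
  have hsplit := prod_properDivisors_mul_primitiveFactor hP hPdvd
  exact ⟨hP.of_mul_monic_left (hsplit ▸ hmonic n hn),
    (prod_divisors_primitiveFactor hn.ne').trans hsplit⟩

end PrimitiveFactor

section Gleason

variable (R : Type*) [CommRing R]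

/-- The paper's `A_n`. -/
noncomputable def gleasonPoly (n : ℕ) : R[X] :=
  (fun p => p ^ 2 + X)^[n] 0

variable {R}

theorem gleasonPoly_succ (n : ℕ) : gleasonPoly R (n + 1) = gleasonPoly R n ^ 2 + X :=
  Function.iterate_succ_apply' _ _ _

theorem gleasonPoly_one : gleasonPoly R 1 = X := by
  simp [gleasonPoly]

theorem map_gleasonPoly {S : Type*} [CommRing S] (φ : R →+* S) (n : ℕ) :
    (gleasonPoly R n).map φ = gleasonPoly S n := by
  induction n with
  | zero => simp [gleasonPoly]
  | succ n ih => simp [gleasonPoly_succ, ih]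

theorem sub_dvd_sq_add_X_sub (p q : R[X]) : p - q ∣ (p ^ 2 + X) - (q ^ 2 + X) := by
  simpa using sub_dvd_pow_sub_pow p q 2

theorem isDvdSequence_gleasonPoly : IsDvdSequence (gleasonPoly R) :=
  isDvdSequence_iterate_zero sub_dvd_sq_add_X_sub

theorem dvd_gleasonPoly_gcd {q : R[X]} {m n : ℕ} (hm : q ∣ gleasonPoly R m)
    (hn : q ∣ gleasonPoly R n) : q ∣ gleasonPoly R (m.gcd n) :=
  dvd_iterate_zero_gcd sub_dvd_sq_add_X_sub hm hn

theorem monic_and_natDegree_gleasonPoly_succ [Nontrivial R] (n : ℕ) :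
    (gleasonPoly R (n + 1)).Monic ∧ (gleasonPoly R (n + 1)).natDegree = 2 ^ n := by
  induction n with
  | zero => simp [gleasonPoly_one]
  | succ n ih =>
    obtain ⟨hmonic, hdeg⟩ := ih
    have hlt : degree (X : R[X]) < degree (gleasonPoly R (n + 1) ^ 2) := by
      rw [degree_X, degree_eq_natDegree (hmonic.pow 2).ne_zero, hmonic.natDegree_pow, hdeg]
      exact_mod_cast (show 1 < 2 * 2 ^ n by have := n.one_le_two_pow; omega)
    rw [gleasonPoly_succ]
    exact ⟨(hmonic.pow 2).add_of_left hlt, by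
      rw [natDegree_add_eq_left_of_degree_lt hlt, hmonic.natDegree_pow, hdeg, pow_succ']⟩

theorem monic_gleasonPoly [Nontrivial R] {n : ℕ} (hn : 0 < n) : (gleasonPoly R n).Monic := by
  obtain ⟨k, rfl⟩ := Nat.exists_eq_add_one_of_ne_zero hn.ne'
  exact (monic_and_natDegree_gleasonPoly_succ k).1

theorem derivative_gleasonPoly_succ [CharP R 2] (n : ℕ) :
    derivative (gleasonPoly R (n + 1)) = 1 := by
  simp [gleasonPoly_succ, derivative_sq, CharTwo.two_eq_zero]

theorem squarefree_gleasonPoly_int {n : ℕ} (hn : 0 < n) : Squarefree (gleasonPoly ℤ n) := by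
  refine (monic_gleasonPoly hn).squarefree_of_map (Int.castRingHom (ZMod 2)) ?_
  obtain ⟨k, rfl⟩ := Nat.exists_eq_add_one_of_ne_zero hn.ne'
  rw [map_gleasonPoly]
  refine Separable.squarefree ((separable_def _).2 ?_)
  rw [derivative_gleasonPoly_succ]
  exact isCoprime_one_right

end Gleason

theorem stmt_4 (A : ℕ → Polynomial ℤ)
    (hA1 : A 1 = X)
    (hArec : ∀ n ≥ 1, A (n + 1) = (A n) ^ 2 + X) :
    ∃ B : ℕ → Polynomial ℤ,
      (∀ n ≥ 1, (B n).Monic) ∧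
      (∀ n ≥ 1, A n = ∏ d ∈ n.divisors, B d) := by
  have hA : ∀ n ≥ 1, A n = gleasonPoly ℤ n := by
    intro n hn
    induction n, hn using Nat.le_induction with
    | base => rw [hA1, gleasonPoly_one]
    | succ n hn ih => rw [hArec n hn, ih, gleasonPoly_succ]
  have key := monic_primitiveFactor_and_prod_divisors (fun _ => monic_gleasonPoly)
    isDvdSequence_gleasonPoly (fun _ _ _ => dvd_gleasonPoly_gcd)
    (fun _ => squarefree_gleasonPoly_int)
  exact ⟨primitiveFactor (gleasonPoly ℤ), fun n hn => (key n hn).1,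
    fun n hn => by rw [hA n hn, (key n hn).2]⟩
end

section
/- Let A_1(c) = c, A_{n+1}(c) = A_n(c)^2 + c, and let B_n ∈ ℤ[c] be the monic polynomials with A_n = ∏_{d|n} B_d. If m ≠ n, then the resultant of B_m and B_n equals ±1 (is a unit in ℤ). -/
open Polynomial

/-- The Sylvester matrix of two polynomials `p`, `q` over `ℤ`:
the first `q.natDegree` rows contain the shifted coefficient sequences of `p`,
the remaining `p.natDegree` rows those of `q`. -/
def sylvesterMatrix (p q : Polynomial ℤ) :
    Matrix (Fin (q.natDegree + p.natDegree)) (Fin (q.natDegree + p.natDegree)) ℤ :=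
  Matrix.of fun i j =>
    if h : (i : ℕ) < q.natDegree then
      if (i : ℕ) ≤ (j : ℕ) then p.coeff ((j : ℕ) - (i : ℕ)) else 0
    else
      if (i : ℕ) - q.natDegree ≤ (j : ℕ) then q.coeff ((j : ℕ) - ((i : ℕ) - q.natDegree))
      else 0

/-- The resultant of two polynomials over `ℤ`, as the determinant of their
Sylvester matrix. -/
def resultant (p q : Polynomial ℤ) : ℤ := (sylvesterMatrix p q).det

/-!
Suppose a prime `ℓ` divides the resultant. As `B m` and `B n` are monic, their reductions then
have a common root `α` in an algebraic closure of `𝔽_ℓ`. Let `e` be the least index with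
`A e (α) = 0`. Since `A e ^ 2` divides `A (k + e) - A k`, the zeros of `k ↦ A k (α)` are exactly
the multiples of `e`; so `e` divides `m` and `n`, and differs from one of them, say `k`.
Then `A k = A e * (1 + A e * t)`, while `A e * B k` divides `A k`; hence `B k` divides
`1 + A e * t`, which takes the value `1` at `α`.
-/
theorem sylvesterMatrix_eq_transpose_sylvester (p q : ℤ[X]) :
    sylvesterMatrix p q = (sylvester q p q.natDegree p.natDegree).transpose := by
  ext i j
  induction i using Fin.addCases with
  | left i =>
    have hp : p.natDegree < j - i → p.coeff (j - i) = 0 := coeff_eq_zero_of_natDegree_lt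
    simp only [sylvesterMatrix, sylvester, Matrix.of_apply, Matrix.transpose_apply,
      Fin.addCases_left, Fin.val_castAdd, i.isLt, dite_true, Set.mem_Icc]
    split_ifs <;> grind
  | right i =>
    have hq : q.natDegree < j - i → q.coeff (j - i) = 0 := coeff_eq_zero_of_natDegree_lt
    simp only [sylvesterMatrix, sylvester, Matrix.of_apply, Matrix.transpose_apply,
      Fin.addCases_right, Fin.val_natAdd, Set.mem_Icc]
    split_ifs <;> grind

theorem resultant_eq_resultant_swap (p q : ℤ[X]) :
    _root_.resultant p q = Polynomial.resultant q p := by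
  rw [_root_.resultant, sylvesterMatrix_eq_transpose_sylvester, Matrix.det_transpose,
    Polynomial.resultant]

namespace Polynomial

universe u

theorem isUnit_resultant_of_forall_eval₂ {R : Type u} [CommRing R] {f g : R[X]}
    (hf : f.Monic) (hg : g.Monic)
    (h : ∀ (K : Type u) [Field K] [IsAlgClosed K] (φ : R →+* K) (x : K),
      f.eval₂ φ x ≠ 0 ∨ g.eval₂ φ x ≠ 0) :
    IsUnit (resultant f g) := by
  by_contra hr
  obtain ⟨M, hM, hrM⟩ := exists_max_ideal_of_mem_nonunits hr
  let := Ideal.Quotient.field M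
  let K := AlgebraicClosure (R ⧸ M)
  have hcop : IsCoprime (f.map (Ideal.Quotient.mk M)) (g.map (Ideal.Quotient.mk M)) := by
    refine (isCoprime_iff_aeval_ne_zero_of_isAlgClosed (R ⧸ M) K _ _).2 fun x => ?_
    simpa only [aeval_def, eval₂_map] using h K ((algebraMap (R ⧸ M) K).comp _) x
  apply resultant_ne_zero _ _ hcop
  rw [hf.natDegree_map, hg.natDegree_map, resultant_map_map, Ideal.Quotient.eq_zero_iff_mem]
  exact hrM

end Polynomial

namespace GleasonPolynomials

variable {R S : Type*} [CommRing R] [CommRing S] {a b : ℕ → R[X]}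

theorem sq_dvd_sub_of_add (ha1 : a 1 = X) (harec : ∀ n ≥ 1, a (n + 1) = a n ^ 2 + X)
    {e k : ℕ} (he : 1 ≤ e) (hk : 1 ≤ k) : a e ^ 2 ∣ a (k + e) - a k := by
  induction k, hk using Nat.le_induction with
  | base => simp [add_comm 1 e, harec e he, ha1]
  | succ k hk ih =>
    have hfactor : a (k + 1 + e) - a (k + 1) = (a (k + e) - a k) * (a (k + e) + a k) := by
      rw [show k + 1 + e = k + e + 1 by omega, harec _ (by omega), harec k hk]
      ring
    exact hfactor ▸ ih.mul_right _

theorem sq_dvd_sub_add_mul (ha1 : a 1 = X) (harec : ∀ n ≥ 1, a (n + 1) = a n ^ 2 + X)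
    {e k : ℕ} (he : 1 ≤ e) (hk : 1 ≤ k) (q : ℕ) : a e ^ 2 ∣ a (k + q * e) - a k := by
  induction q with
  | zero => simp
  | succ q ih =>
    have hsplit : a (k + (q + 1) * e) - a k =
        (a (k + q * e + e) - a (k + q * e)) + (a (k + q * e) - a k) := by
      rw [show k + (q + 1) * e = k + q * e + e by ring]
      ring
    exact hsplit ▸ dvd_add (sq_dvd_sub_of_add ha1 harec he (by omega)) ih

theorem eval₂_add_mul_eq (ha1 : a 1 = X) (harec : ∀ n ≥ 1, a (n + 1) = a n ^ 2 + X)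
    (φ : R →+* S) {α : S} {e k : ℕ} (he : 1 ≤ e) (hα : (a e).eval₂ φ α = 0) (hk : 1 ≤ k)
    (q : ℕ) : (a (k + q * e)).eval₂ φ α = (a k).eval₂ φ α := by
  obtain ⟨t, ht⟩ := sq_dvd_sub_add_mul ha1 harec he hk q
  rw [sub_eq_iff_eq_add'.mp ht, eval₂_add, eval₂_mul, eval₂_pow, hα]
  simp

theorem dvd_of_eval₂_eq_zero (ha1 : a 1 = X) (harec : ∀ n ≥ 1, a (n + 1) = a n ^ 2 + X)
    (φ : R →+* S) {α : S} {e k : ℕ} (he : 1 ≤ e) (hα : (a e).eval₂ φ α = 0)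
    (hmin : ∀ j, 1 ≤ j → j < e → (a j).eval₂ φ α ≠ 0)
    (hak : (a k).eval₂ φ α = 0) : e ∣ k := by
  by_contra hdvd
  have hrem : 1 ≤ k % e := Nat.pos_of_ne_zero (mt Nat.dvd_of_mod_eq_zero hdvd)
  apply hmin (k % e) hrem (Nat.mod_lt k he)
  rw [← eval₂_add_mul_eq ha1 harec φ he hα hrem (k / e), Nat.mod_add_div', hak]

variable [IsDomain R]

theorem exists_dvd_one_add_mul (ha1 : a 1 = X) (harec : ∀ n ≥ 1, a (n + 1) = a n ^ 2 + X)
    (hbm : ∀ n ≥ 1, (b n).Monic) (hprod : ∀ n ≥ 1, a n = ∏ d ∈ n.divisors, b d)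
    {e k : ℕ} (he : 1 ≤ e) (hk : 1 ≤ k) (hek : e ∣ k) (hne : e ≠ k) :
    ∃ t, b k ∣ 1 + a e * t := by
  have hae : a e ≠ 0 := by
    rw [hprod e he]
    exact (monic_prod_of_monic _ _ fun d hd => hbm d (Nat.pos_of_mem_divisors hd)).ne_zero
  obtain ⟨t, ht⟩ : a e ^ 2 ∣ a k - a e := by
    obtain ⟨_ | q, rfl⟩ := hek
    · omega
    · simpa only [show e * (q + 1) = e + q * e by ring] using sq_dvd_sub_add_mul ha1 harec he he q
  have hsdiff := Finset.prod_sdiff (f := b) (Nat.divisors_subset_of_dvd (by omega) hek)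
  rw [← hprod e he, ← hprod k hk] at hsdiff
  have hcofactor : ∏ d ∈ k.divisors \ e.divisors, b d = 1 + a e * t :=
    mul_left_cancel₀ hae (by linear_combination hsdiff + ht)
  refine ⟨t, hcofactor ▸ Finset.dvd_prod_of_mem b ?_⟩
  rw [Finset.mem_sdiff, Nat.mem_divisors, Nat.mem_divisors]
  exact ⟨⟨dvd_rfl, by omega⟩, fun h => hne (Nat.dvd_antisymm hek h.1)⟩

theorem eval₂_ne_zero_of_dvd (ha1 : a 1 = X) (harec : ∀ n ≥ 1, a (n + 1) = a n ^ 2 + X)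
    (hbm : ∀ n ≥ 1, (b n).Monic) (hprod : ∀ n ≥ 1, a n = ∏ d ∈ n.divisors, b d)
    [Nontrivial S] (φ : R →+* S) {α : S} {e k : ℕ} (he : 1 ≤ e) (hα : (a e).eval₂ φ α = 0)
    (hk : 1 ≤ k) (hek : e ∣ k) (hne : e ≠ k) : (b k).eval₂ φ α ≠ 0 := by
  obtain ⟨t, c, hc⟩ := exists_dvd_one_add_mul ha1 harec hbm hprod he hk hek hne
  intro hbk
  simpa [hα, hbk] using congrArg (eval₂ φ α) hc

theorem eval₂_ne_zero_or_eval₂_ne_zero (ha1 : a 1 = X)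
    (harec : ∀ n ≥ 1, a (n + 1) = a n ^ 2 + X) (hbm : ∀ n ≥ 1, (b n).Monic)
    (hprod : ∀ n ≥ 1, a n = ∏ d ∈ n.divisors, b d) [Nontrivial S] (φ : R →+* S) (α : S)
    {m n : ℕ} (hm : 1 ≤ m) (hn : 1 ≤ n) (hmn : m ≠ n) :
    (b m).eval₂ φ α ≠ 0 ∨ (b n).eval₂ φ α ≠ 0 := by
  classical
  by_contra! hroot
  have ha_of_hb : ∀ k ≥ 1, (b k).eval₂ φ α = 0 → (a k).eval₂ φ α = 0 := fun k hk hbk => by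
    obtain ⟨c, hc⟩ := Finset.dvd_prod_of_mem b (Nat.mem_divisors_self k (by omega))
    rw [hprod k hk, hc, eval₂_mul, hbk, zero_mul]
  have hzero : ∃ j, 1 ≤ j ∧ (a j).eval₂ φ α = 0 := ⟨m, hm, ha_of_hb m hm hroot.1⟩
  obtain ⟨he, hα⟩ := Nat.find_spec hzero
  have hmin : ∀ j, 1 ≤ j → j < Nat.find hzero → (a j).eval₂ φ α ≠ 0 :=
    fun j hj hlt hj0 => Nat.find_min hzero hlt ⟨hj, hj0⟩
  have hdvd : ∀ k ≥ 1, (b k).eval₂ φ α = 0 → Nat.find hzero ∣ k := fun k hk hbk =>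
    dvd_of_eval₂_eq_zero ha1 harec φ he hα hmin (ha_of_hb k hk hbk)
  rcases eq_or_ne (Nat.find hzero) m with hem | hem
  · exact eval₂_ne_zero_of_dvd ha1 harec hbm hprod φ he hα hn (hdvd n hn hroot.2)
      (hem ▸ hmn) hroot.2
  · exact eval₂_ne_zero_of_dvd ha1 harec hbm hprod φ he hα hm (hdvd m hm hroot.1) hem hroot.1

end GleasonPolynomials

theorem stmt_5 (A : ℕ → Polynomial ℤ)
    (hA1 : A 1 = X)
    (hArec : ∀ n ≥ 1, A (n + 1) = (A n) ^ 2 + X)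
    (B : ℕ → Polynomial ℤ)
    (hBmonic : ∀ n ≥ 1, (B n).Monic)
    (hBprod : ∀ n ≥ 1, A n = ∏ d ∈ n.divisors, B d)
    (m n : ℕ) (hm : 1 ≤ m) (hn : 1 ≤ n) (hmn : m ≠ n) :
    _root_.resultant (B m) (B n) = 1 ∨ _root_.resultant (B m) (B n) = -1 := by
  rw [← Int.isUnit_iff, resultant_eq_resultant_swap]
  exact isUnit_resultant_of_forall_eval₂ (hBmonic n hn) (hBmonic m hm) fun _ _ _ φ x =>
    GleasonPolynomials.eval₂_ne_zero_or_eval₂_ne_zero hA1 hArec hBmonic hBprod φ x hn hm hmn.symm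
end

section
/- Suppose 4 divides n and c ∈ ℚ is such that A_n(c) is a square in ℚ, where A_1(c) = c, A_{k+1}(c) = A_k(c)^2 + c. Assuming the known fact that A_4(c) is a square only for c = 0 and c = -1, conclude c = 0 or c = -1. -/
/-!
Write `A k` for `quadOrbit c k`. Since `x ↦ x ^ 2 + c` multiplies differences by `x + y`, and
`(A n) ^ 2 + c - (0 ^ 2 + c) = (A n) ^ 2`, the square `(A n) ^ 2` divides `A (n + k) - A k`; hence
for `k ∣ n` we get `A n = A k * (1 + A k * w)` with `w` an integer polynomial in `c`.

If `A n` is a square, every `p`-adic valuation of `A k` is even (`k ≥ 2`): when `c` is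
`p`-integral, `1 + A k * w` is a `p`-adic unit unless `A k` is one; otherwise
`v_p (A k) = 2 ^ (k - 1) * v_p c`. So `A k = ± s ^ 2`, and the minus sign is excluded 2-adically
using `v_2 (1 + t ^ 2) ≤ 1`. If `v_2 c < 0`, then `A k = -s ^ 2` gives
`1 + (s / A (k - 1)) ^ 2 = -c / A (k - 1) ^ 2`, of valuation `(1 - 2 ^ (k - 1)) * v_2 c ≥ 3`
for `k ≥ 3`. If `c` is 2-integral, `A 2 = c * (c + 1)` is even and divides `A k` for even `k`,
so `v_2 (A k) ≥ 2`, while `A k = -s ^ 2` and `A n = y ^ 2` give `1 + (y / s) ^ 2 = s ^ 2 * w`.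
-/

def quadOrbit {R : Type*} [Semiring R] (c : R) (n : ℕ) : R := (fun x ↦ x ^ 2 + c)^[n] 0

section Algebra

variable {R : Type*}

section Semiring

variable [Semiring R] (c : R)

@[simp]
theorem quadOrbit_zero : quadOrbit c 0 = 0 := rfl

theorem quadOrbit_succ (n : ℕ) : quadOrbit c (n + 1) = quadOrbit c n ^ 2 + c :=
  Function.iterate_succ_apply' _ _ _

theorem quadOrbit_add (n k : ℕ) :
    quadOrbit c (n + k) = (fun x ↦ x ^ 2 + c)^[k] (quadOrbit c n) := by
  rw [quadOrbit, add_comm, Function.iterate_add_apply, quadOrbit]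

theorem map_quadOrbit {S : Type*} [Semiring S] (f : R →+* S) (n : ℕ) :
    f (quadOrbit c n) = quadOrbit (f c) n := by
  induction n with
  | zero => simp
  | succ n ih => simp [quadOrbit_succ, ih]

end Semiring

variable [CommRing R] (c : R)

theorem sub_dvd_iterate_sq_add_sub (a b : R) (k : ℕ) :
    a - b ∣ (fun x ↦ x ^ 2 + c)^[k] a - (fun x ↦ x ^ 2 + c)^[k] b := by
  induction k with
  | zero => simp
  | succ k ih =>
    simp only [Function.iterate_succ_apply', add_sub_add_right_eq_sub, sq_sub_sq]
    exact ih.mul_left _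

theorem sq_dvd_quadOrbit_add_sub (n : ℕ) {k : ℕ} (hk : k ≠ 0) :
    quadOrbit c n ^ 2 ∣ quadOrbit c (n + k) - quadOrbit c k := by
  obtain ⟨k, rfl⟩ := Nat.exists_eq_add_one_of_ne_zero hk
  have h := sub_dvd_iterate_sq_add_sub c (quadOrbit c (n + 1)) (quadOrbit c 1) k
  rw [← quadOrbit_add, ← quadOrbit_add, add_assoc, add_comm 1 k] at h
  simpa [quadOrbit_succ] using h

theorem exists_quadOrbit_eq_mul_one_add_mul {k n : ℕ} (hkn : k ∣ n) (hn : n ≠ 0) :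
    ∃ w, quadOrbit c n = quadOrbit c k * (1 + quadOrbit c k * w) := by
  obtain ⟨m, rfl⟩ := hkn
  have hk : k ≠ 0 := left_ne_zero_of_mul hn
  obtain ⟨m, rfl⟩ := Nat.exists_eq_add_one_of_ne_zero (right_ne_zero_of_mul hn)
  induction m with
  | zero => exact ⟨0, by simp⟩
  | succ m ih =>
    obtain ⟨u, hu⟩ := ih (by positivity)
    obtain ⟨g, hg⟩ := sq_dvd_quadOrbit_add_sub c (k * (m + 1)) hk
    refine ⟨(1 + quadOrbit c k * u) ^ 2 * g, ?_⟩
    rw [show k * (m + 1 + 1) = k * (m + 1) + k by ring,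
      ← sub_add_cancel (quadOrbit c _) (quadOrbit c k), hg, hu]
    ring

theorem Subring.coe_quadOrbit {S : Subring R} (a : S) (n : ℕ) :
    ((quadOrbit a n : S) : R) = quadOrbit (a : R) n :=
  map_quadOrbit a S.subtype n

theorem quadOrbit_mem {S : Subring R} (hc : c ∈ S) (n : ℕ) : quadOrbit c n ∈ S :=
  Subring.coe_quadOrbit ⟨c, hc⟩ n ▸ (quadOrbit (⟨c, hc⟩ : S) n).2

theorem exists_mem_quadOrbit_eq_mul_one_add_mul {S : Subring R} (hc : c ∈ S) {k n : ℕ}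
    (hkn : k ∣ n) (hn : n ≠ 0) :
    ∃ w ∈ S, quadOrbit c n = quadOrbit c k * (1 + quadOrbit c k * w) := by
  obtain ⟨w, hw⟩ := exists_quadOrbit_eq_mul_one_add_mul (⟨c, hc⟩ : S) hkn hn
  refine ⟨w, w.2, ?_⟩
  simpa only [Subring.coe_mul, Subring.coe_add, Subring.coe_one, Subring.coe_quadOrbit]
    using congrArg Subtype.val hw

end Algebra

section Padic

variable {p : ℕ} [Fact p.Prime]

theorem Rat.mem_padicValuation_integer_iff {x : ℚ} :
    x ∈ (Rat.padicValuation p).integer ↔ 0 ≤ padicValRat p x := by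
  by_cases hx : x = 0
  · simp [hx]
  · simp only [Rat.padicValuation, Valuation.mem_integer_iff, Valuation.coe_mk,
      MonoidWithZeroHom.coe_mk, ZeroHom.coe_mk, hx, ↓reduceIte]
    rw [← WithZero.exp_zero, WithZero.exp_le_exp, neg_nonpos]

theorem IsSquare.even_padicValRat {x : ℚ} (h : IsSquare x) : Even (padicValRat p x) := by
  obtain ⟨r, rfl⟩ := h
  rcases eq_or_ne r 0 with rfl | hr
  · simp
  · exact ⟨_, padicValRat.mul hr hr⟩

theorem padicValRat.add_ne_zero_and_eq_of_lt {x y : ℚ} (hx : x ≠ 0)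
    (hxy : padicValRat p x < padicValRat p y) :
    x + y ≠ 0 ∧ padicValRat p (x + y) = padicValRat p x := by
  rcases eq_or_ne y 0 with rfl | hy
  · simpa using hx
  have hsum : x + y ≠ 0 := by
    intro h
    rw [eq_neg_of_add_eq_zero_right h, padicValRat.neg] at hxy
    exact hxy.false
  exact ⟨hsum, padicValRat.add_eq_of_lt hsum hx hy hxy⟩

theorem even_padicValRat_of_isSquare_mul_one_add_mul {Q w : ℚ} (hQ : 0 ≤ padicValRat p Q)
    (hw : 0 ≤ padicValRat p w) (h : IsSquare (Q * (1 + Q * w))) : Even (padicValRat p Q) := by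
  rcases hQ.eq_or_lt with hQ0 | hQpos
  · simp [← hQ0]
  have hQ0 : Q ≠ 0 := by rintro rfl; simp at hQpos
  rcases eq_or_ne w 0 with rfl | hw0
  · simpa using h.even_padicValRat (p := p)
  obtain ⟨hu0, hu⟩ := padicValRat.add_ne_zero_and_eq_of_lt (p := p) one_ne_zero (y := Q * w)
    (by rw [padicValRat.mul hQ0 hw0, padicValRat.one]; omega)
  simpa [padicValRat.mul hQ0 hu0, hu] using h.even_padicValRat (p := p)

theorem padicValRat_quadOrbit_of_neg {c : ℚ} (hc : padicValRat p c < 0) (k : ℕ) :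
    quadOrbit c (k + 1) ≠ 0 ∧ padicValRat p (quadOrbit c (k + 1)) = 2 ^ k * padicValRat p c := by
  have hc0 : c ≠ 0 := by rintro rfl; simp at hc
  induction k with
  | zero => simpa [quadOrbit_succ] using hc0
  | succ k ih =>
    obtain ⟨hA0, hA⟩ := ih
    have hsq : padicValRat p (quadOrbit c (k + 1) ^ 2) = 2 ^ (k + 1) * padicValRat p c := by
      rw [padicValRat.pow, hA]; ring
    have hlt : padicValRat p (quadOrbit c (k + 1) ^ 2) < padicValRat p c := by
      have h2 : (2 : ℤ) ≤ 2 ^ (k + 1) := le_self_pow₀ one_le_two (Nat.succ_ne_zero k)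
      rw [hsq]
      nlinarith
    rw [quadOrbit_succ, ← hsq]
    exact padicValRat.add_ne_zero_and_eq_of_lt (pow_ne_zero 2 hA0) hlt

theorem even_padicValRat_quadOrbit {c : ℚ} {k n : ℕ} (hk : 2 ≤ k) (hkn : k ∣ n) (hn : n ≠ 0)
    (h : IsSquare (quadOrbit c n)) : Even (padicValRat p (quadOrbit c k)) := by
  rcases lt_or_ge (padicValRat p c) 0 with hc | hc
  · obtain ⟨j, rfl⟩ : ∃ j, k = j + 1 + 1 := ⟨k - 2, by omega⟩
    rw [(padicValRat_quadOrbit_of_neg hc (j + 1)).2]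
    exact ⟨2 ^ j * padicValRat p c, by ring⟩
  · have hc' := Rat.mem_padicValuation_integer_iff.mpr hc
    obtain ⟨w, hw, hdec⟩ := exists_mem_quadOrbit_eq_mul_one_add_mul c hc' hkn hn
    exact even_padicValRat_of_isSquare_mul_one_add_mul
      (Rat.mem_padicValuation_integer_iff.mp (quadOrbit_mem c hc' k))
      (Rat.mem_padicValuation_integer_iff.mp hw) (hdec ▸ h)

end Padic

theorem Nat.isSquare_of_forall_even_padicValNat {n : ℕ}
    (h : ∀ p, p.Prime → Even (padicValNat p n)) : IsSquare n := by
  rcases n.eq_zero_or_pos with rfl | hn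
  · exact IsSquare.zero
  obtain ⟨a, b, ha, hb, rfl, hsf⟩ := Nat.sq_mul_squarefree_of_pos hn
  obtain rfl : a = 1 := by
    by_contra ha1
    obtain ⟨q, hq, hqa⟩ := Nat.exists_prime_and_dvd ha1
    have := Fact.mk hq
    have hva : padicValNat q a = 1 :=
      le_antisymm (Nat.factorization_def a hq ▸ hsf.natFactorization_le_one q)
        (one_le_padicValNat_of_dvd ha.ne' hqa)
    have hodd := h q hq
    rw [padicValNat.mul (pow_ne_zero 2 hb.ne') ha.ne', padicValNat.pow, hva] at hodd
    exact Nat.not_even_two_mul_add_one _ hodd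
  exact ⟨b, by ring⟩

theorem Rat.isSquare_or_isSquare_neg_of_forall_even_padicValRat {r : ℚ}
    (h : ∀ p, p.Prime → Even (padicValRat p r)) : IsSquare r ∨ IsSquare (-r) := by
  have heven : ∀ p, p.Prime → Even (padicValNat p r.num.natAbs) ∧ Even (padicValNat p r.den) := by
    intro p hp
    have := Fact.mk hp
    have hr := h p hp
    rw [padicValRat_def, padicValInt] at hr
    have hcop : padicValNat p r.num.natAbs = 0 ∨ padicValNat p r.den = 0 := by
      by_contra! hne
      exact hp.one_lt.ne' (Nat.eq_one_of_dvd_coprimes r.reduced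
        (dvd_of_one_le_padicValNat (Nat.one_le_iff_ne_zero.mpr hne.1))
        (dvd_of_one_le_padicValNat (Nat.one_le_iff_ne_zero.mpr hne.2)))
    rcases hcop with h0 | h0 <;> rw [h0] at hr ⊢ <;> simpa [Int.even_sub, parity_simps] using hr
  have habs : IsSquare |r| := by
    rw [Rat.isSquare_iff, Rat.num_abs_eq_abs_num, Rat.den_abs_eq_den, Int.abs_eq_natAbs,
      Int.isSquare_natCast_iff]
    exact ⟨Nat.isSquare_of_forall_even_padicValNat fun p hp ↦ (heven p hp).1,
      Nat.isSquare_of_forall_even_padicValNat fun p hp ↦ (heven p hp).2⟩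
  rcases abs_choice r with hr | hr
  · exact Or.inl (hr ▸ habs)
  · exact Or.inr (hr ▸ habs)

theorem Int.not_four_dvd_sq_add_sq {a b : ℤ} (h : ¬ (2 ∣ a ∧ 2 ∣ b)) : ¬ 4 ∣ a ^ 2 + b ^ 2 := by
  have hsq (x : ℤ) : 2 ∣ x ∧ x ^ 2 % 4 = 0 ∨ ¬ 2 ∣ x ∧ x ^ 2 % 4 = 1 := by
    rcases Int.even_or_odd x with ⟨m, rfl⟩ | hx
    · exact Or.inl ⟨⟨m, by ring⟩, by rw [show (m + m) ^ 2 = 4 * m ^ 2 by ring]; simp⟩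
    · exact Or.inr ⟨Int.not_even_iff_odd.mpr hx ∘ even_iff_two_dvd.mpr,
        Int.sq_mod_four_eq_one_of_odd hx⟩
  rcases hsq a with ha | ha <;> rcases hsq b with hb | hb <;> omega

theorem padicValRat_two_one_add_sq_le_one (t : ℚ) : padicValRat 2 (1 + t ^ 2) ≤ 1 := by
  have hden : (t.den : ℚ) ≠ 0 := by exact_mod_cast t.den_nz
  have hsum : t.num ^ 2 + (t.den : ℤ) ^ 2 ≠ 0 := by positivity
  have ht : 1 + t ^ 2 = ((t.num ^ 2 + (t.den : ℤ) ^ 2 : ℤ) : ℚ) / (t.den : ℚ) ^ 2 := by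
    conv_lhs => rw [← Rat.num_div_den t]
    field_simp
    push_cast
    ring
  have hnum : padicValInt 2 (t.num ^ 2 + (t.den : ℤ) ^ 2) ≤ 1 := by
    by_contra! hv
    refine Int.not_four_dvd_sq_add_sq (fun ⟨ha, hb⟩ ↦ ?_)
      ((padicValInt_dvd_iff 2 _).mpr (Or.inr hv))
    exact absurd (Nat.eq_one_of_dvd_coprimes t.reduced (Int.ofNat_dvd_left.mp ha)
      (Int.natCast_dvd_natCast.mp hb)) (by norm_num)
  rw [ht, padicValRat.div (by exact_mod_cast hsum) (pow_ne_zero 2 hden), padicValRat.pow,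
    padicValRat.of_int, padicValRat.of_nat]
  omega

theorem one_le_padicValRat_two_sq_add_self {c : ℚ} (hc : 0 ≤ padicValRat 2 c)
    (h0 : c ^ 2 + c ≠ 0) : 1 ≤ padicValRat 2 (c ^ 2 + c) := by
  have hden : ¬ 2 ∣ c.den :=
    Rat.padicValuation_le_one_iff.mp (Rat.mem_padicValuation_integer_iff.mpr hc)
  have hden0 : (c.den : ℚ) ≠ 0 := by exact_mod_cast c.den_nz
  have hc2 : c ^ 2 + c = ((c.num * (c.num + c.den) : ℤ) : ℚ) / (c.den : ℚ) ^ 2 := by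
    conv_lhs => rw [← Rat.num_div_den c]
    field_simp
    push_cast
    ring
  have hnum0 : c.num * (c.num + c.den) ≠ 0 := by
    rintro h
    rw [h] at hc2
    simp [hc2] at h0
  have hnum : 1 ≤ padicValInt 2 (c.num * (c.num + c.den)) := by
    refine ((padicValInt_dvd_iff 1 _).mp ?_).resolve_left hnum0
    have hodd : Odd (c.den : ℤ) :=
      (Int.odd_coe_nat _).mpr (Nat.odd_iff.mpr (Nat.two_dvd_ne_zero.mp hden))
    rcases Int.even_or_odd c.num with ha | ha
    · simpa using (even_iff_two_dvd.mp ha).mul_right _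
    · simpa using (even_iff_two_dvd.mp (ha.add_odd hodd)).mul_left _
  rw [hc2, padicValRat.div (by exact_mod_cast hnum0) (pow_ne_zero 2 hden0), padicValRat.pow,
    padicValRat.of_int, padicValRat.of_nat, padicValNat.eq_zero_of_not_dvd hden]
  omega

theorem padicValRat_two_le_one_of_isSquare_neg {Q w : ℚ} (hw : 0 ≤ padicValRat 2 w)
    (h : IsSquare (Q * (1 + Q * w))) (hQ : IsSquare (-Q)) : padicValRat 2 Q ≤ 1 := by
  obtain ⟨s, hs⟩ := hQ
  obtain ⟨y, hy⟩ := h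
  rcases eq_or_ne s 0 with rfl | hs0
  · simp [neg_eq_zero.mp (by simpa using hs)]
  have hQs : padicValRat 2 Q = 2 * padicValRat 2 s := by
    rw [← neg_neg Q, hs, padicValRat.neg, padicValRat.mul hs0 hs0]
    ring
  have key : 1 + (y / s) ^ 2 = s ^ 2 * w := by
    field_simp
    linear_combination -hy - (1 + w * (Q - s ^ 2)) * hs
  have hw0 : w ≠ 0 := by
    rintro rfl
    nlinarith [sq_nonneg (y / s)]
  have hle := padicValRat_two_one_add_sq_le_one (y / s)
  rw [key, padicValRat.mul (pow_ne_zero 2 hs0) hw0, padicValRat.pow] at hle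
  push_cast at hle
  omega

theorem not_isSquare_neg_quadOrbit_of_padicValRat_two_neg {c : ℚ} (hc : padicValRat 2 c < 0)
    (k : ℕ) : ¬ IsSquare (-quadOrbit c (k + 3)) := by
  rintro ⟨s, hs⟩
  obtain ⟨hA0, hA⟩ := padicValRat_quadOrbit_of_neg hc (k + 1)
  set A := quadOrbit c (k + 2)
  have key : -c = A ^ 2 * (1 + (s / A) ^ 2) := by
    rw [quadOrbit_succ] at hs
    field_simp
    linear_combination hs
  have hle := padicValRat_two_one_add_sq_le_one (s / A)
  have hval := congrArg (padicValRat 2) key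
  rw [padicValRat.neg, padicValRat.mul (pow_ne_zero 2 hA0) (by positivity), padicValRat.pow,
    hA] at hval
  have h2 : (2 : ℤ) ≤ 2 ^ (k + 1) := le_self_pow₀ one_le_two (Nat.succ_ne_zero k)
  push_cast at hval
  nlinarith

theorem one_le_padicValRat_two_quadOrbit {c : ℚ} (hc : 0 ≤ padicValRat 2 c) {k : ℕ}
    (h2k : 2 ∣ k) (h0 : quadOrbit c k ≠ 0) : 1 ≤ padicValRat 2 (quadOrbit c k) := by
  have hc' := Rat.mem_padicValuation_integer_iff.mpr hc
  have hk : k ≠ 0 := by rintro rfl; exact h0 rfl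
  obtain ⟨w, hw, hdec⟩ := exists_mem_quadOrbit_eq_mul_one_add_mul c hc' h2k hk
  have hu := add_mem (one_mem _) (mul_mem (quadOrbit_mem c hc' 2) hw)
  have hA2 : quadOrbit c 2 = c ^ 2 + c := by simp [quadOrbit_succ]
  rw [hdec] at h0 ⊢
  obtain ⟨hA0, hu0⟩ := mul_ne_zero_iff.mp h0
  have h2 : 1 ≤ padicValRat 2 (quadOrbit c 2) := by
    rw [hA2] at hA0 ⊢
    exact one_le_padicValRat_two_sq_add_self hc hA0
  have hu' := Rat.mem_padicValuation_integer_iff.mp hu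
  rw [padicValRat.mul hA0 hu0]
  omega

theorem isSquare_quadOrbit_of_dvd {c : ℚ} {k n : ℕ} (hk : 4 ≤ k) (h2k : 2 ∣ k) (hkn : k ∣ n)
    (hn : n ≠ 0) (h : IsSquare (quadOrbit c n)) : IsSquare (quadOrbit c k) := by
  rcases eq_or_ne (quadOrbit c k) 0 with hQ0 | hQ0
  · exact hQ0 ▸ IsSquare.zero
  have heven (p : ℕ) (hp : p.Prime) : Even (padicValRat p (quadOrbit c k)) :=
    have := Fact.mk hp
    even_padicValRat_quadOrbit (by omega) hkn hn h
  refine (Rat.isSquare_or_isSquare_neg_of_forall_even_padicValRat heven).resolve_right ?_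
  intro hneg
  rcases lt_or_ge (padicValRat 2 c) 0 with hc | hc
  · obtain ⟨j, rfl⟩ : ∃ j, k = j + 3 := ⟨k - 3, by omega⟩
    exact not_isSquare_neg_quadOrbit_of_padicValRat_two_neg hc j hneg
  · obtain ⟨w, hw, hdec⟩ :=
      exists_mem_quadOrbit_eq_mul_one_add_mul c (Rat.mem_padicValuation_integer_iff.mpr hc) hkn hn
    have hle := padicValRat_two_le_one_of_isSquare_neg
      (Rat.mem_padicValuation_integer_iff.mp hw) (hdec ▸ h) hneg
    have hge := one_le_padicValRat_two_quadOrbit hc h2k hQ0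
    obtain ⟨m, hm⟩ := heven 2 Nat.prime_two
    omega

theorem stmt_7 (A : ℕ → ℚ → ℚ)
    (hA1 : ∀ c, A 1 c = c)
    (hArec : ∀ n ≥ 1, ∀ c, A (n + 1) c = (A n c) ^ 2 + c)
    (hA4 : ∀ c : ℚ, IsSquare (A 4 c) → c = 0 ∨ c = -1)
    (n : ℕ) (hn : n ≠ 0) (h4n : 4 ∣ n)
    (c : ℚ) (hsq : IsSquare (A n c)) :
    c = 0 ∨ c = -1 := by
  have hA (k : ℕ) : A (k + 1) c = quadOrbit c (k + 1) := by
    induction k with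
    | zero => simp [hA1, quadOrbit_succ]
    | succ k ih => rw [hArec (k + 1) (Nat.le_add_left 1 k), ih, ← quadOrbit_succ]
  obtain ⟨m, rfl⟩ := Nat.exists_eq_add_one_of_ne_zero hn
  rw [hA m] at hsq
  apply hA4 c
  rw [hA 3]
  exact isSquare_quadOrbit_of_dvd le_rfl (by norm_num) h4n hn hsq
end

section
/- Let n = 2m with m odd and let p be a prime divisor of m. If c ∈ ℚ is such that A_n(c) is a square in ℚ, then A_p(c) is a square in ℚ or -A_p(c) is a square in ℚ; moreover A_2(c) = c(c+1) is a square in ℚ. Here A_1(c) = c and A_{k+1}(c) = A_k(c)^2 + c. -/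
/-!
Write `c = a / b` in lowest terms. Clearing denominators, `A_k(c) = N_k / b ^ 2 ^ (k - 1)` with
integers `N_k` satisfying `N_{k+1} = N_k ^ 2 + a b ^ (2 ^ k - 1)`. Restarting the recursion at
`N_t ≡ 0` shows `N_{t+j} ≡ b ^ e N_j (mod N_t ^ 2)`, so for `d ∣ n` we get `N_n = N_d W` with
`W ≡ b ^ e (mod N_d)`; since `N_d` is prime to `b`, `W` is prime to `N_d`. Hence if `N_n` is a
square, `N_d` is a square up to sign. Take `d = p` and `d = 2`; for `d = 2` the sign is `+`, since
`c (c + 1) < 0` would trap the whole orbit in `[c, 0)`.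
-/

/-- `critOrbit c k` is `A_k(c)`, the orbit of the critical point `0` of `x ↦ x ^ 2 + c`. -/
def critOrbit {R : Type*} [Semiring R] (c : R) : ℕ → R
  | 0 => 0
  | k + 1 => critOrbit c k ^ 2 + c

/-- Numerator of `critOrbit (a / b) k` over the denominator `b ^ 2 ^ (k - 1)` (for `k ≥ 1`). -/
def critNum (a b : ℤ) : ℕ → ℤ
  | 0 => 0
  | k + 1 => critNum a b k ^ 2 + a * b ^ (2 ^ k - 1)

theorem eq_critOrbit {A : ℕ → ℚ → ℚ} (hA1 : ∀ c, A 1 c = c)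
    (hArec : ∀ n ≥ 1, ∀ c, A (n + 1) c = A n c ^ 2 + c) (c : ℚ) :
    ∀ k, A (k + 1) c = critOrbit c (k + 1)
  | 0 => by simp [hA1, critOrbit]
  | k + 1 => by rw [hArec _ (by omega), eq_critOrbit hA1 hArec c k]; rfl

section Order

variable {R : Type*} [CommRing R] [LinearOrder R] [IsStrictOrderedRing R] {c : R}

theorem critOrbit_mem_Ico (hc : c ∈ Set.Ioo (-1) 0) :
    ∀ k, critOrbit c (k + 1) ∈ Set.Ico c 0
  | 0 => by simpa [critOrbit] using hc.2
  | k + 1 => by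
    obtain ⟨hlo, hhi⟩ := critOrbit_mem_Ico hc k
    rw [critOrbit]
    constructor <;> nlinarith [hc.1]

theorem mul_add_one_nonneg_of_critOrbit_nonneg {n : ℕ} (hn : n ≠ 0)
    (h : 0 ≤ critOrbit c n) : 0 ≤ c * (c + 1) := by
  by_contra! hneg
  obtain ⟨k, rfl⟩ := Nat.exists_eq_succ_of_ne_zero hn
  have hc : c ∈ Set.Ioo (-1) 0 := ⟨by nlinarith, by nlinarith⟩
  exact (critOrbit_mem_Ico hc k).2.not_ge h

end Order

@[simp]
theorem critNum_one (a b : ℤ) : critNum a b 1 = a := by simp [critNum]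

namespace critNum

variable {a b : ℤ}

theorem cast_eq {R : Type*} [CommRing R] {c : R} (hc : c * b = a) :
    ∀ j, (critNum a b (j + 1) : R) = critOrbit c (j + 1) * (b : R) ^ 2 ^ j
  | 0 => by simp [critOrbit, hc]
  | j + 1 => by
    have hexp : (b : R) * (b : R) ^ (2 ^ (j + 1) - 1) = (b : R) ^ 2 ^ j * (b : R) ^ 2 ^ j := by
      rw [← pow_succ', ← pow_add, Nat.sub_add_cancel Nat.one_le_two_pow, pow_succ, mul_two]
    rw [critNum, critOrbit]
    push_cast
    rw [cast_eq hc j, ← hc]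
    linear_combination c * hexp

theorem isCoprime (h : IsCoprime a b) : ∀ k, IsCoprime (critNum a b (k + 1)) b
  | 0 => by simpa using h
  | k + 1 => by
    obtain ⟨z, hz⟩ : b ∣ b ^ (2 ^ (k + 1) - 1) :=
      dvd_pow_self b (Nat.sub_ne_zero_of_lt (Nat.one_lt_two_pow k.succ_ne_zero))
    rw [critNum, hz, mul_left_comm]
    exact (isCoprime h k).pow_left.add_mul_left_left _

/-- Homogenised form of `f^[i] (f^[t] 0) = f^[t + i] 0` for `f x = x ^ 2 + c`: the orbit restarts
at `critNum a b t ≡ 0`. -/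
theorem add_modEq (t i : ℕ) :
    critNum a b (t + i + 1) ≡ b ^ (2 ^ i * (2 ^ t - 1)) * critNum a b (i + 1)
      [ZMOD critNum a b t ^ 2] := by
  induction i with
  | zero =>
    rw [add_zero, Int.modEq_iff_dvd]
    exact ⟨-1, by rw [critNum.eq_2 a b t, critNum_one]; ring⟩
  | succ i ih =>
    have hexp : 2 ^ (i + 1) * (2 ^ t - 1) + (2 ^ (i + 1) - 1) = 2 ^ (t + i + 1) - 1 := by
      zify [Nat.one_le_two_pow (n := t), Nat.one_le_two_pow (n := i + 1),
        Nat.one_le_two_pow (n := t + i + 1)]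
      ring
    rw [show t + (i + 1) + 1 = t + i + 1 + 1 by omega, critNum.eq_2 a b (t + i + 1),
      critNum.eq_2 a b (i + 1)]
    refine ((ih.pow 2).add_right _).trans ?_
    rw [← hexp, pow_add, pow_succ 2 i, mul_comm _ 2, pow_mul]
    congr 1
    ring

theorem exists_mul_eq (h : IsCoprime a b) (d k : ℕ) :
    ∃ w, critNum a b ((d + 1) * (k + 1)) = critNum a b (d + 1) * w ∧
      IsCoprime (critNum a b (d + 1)) w := by
  induction k with
  | zero => exact ⟨1, by simp, isCoprime_one_right⟩
  | succ k ih =>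
    obtain ⟨w, hw, -⟩ := ih
    obtain ⟨z, hz⟩ := (add_modEq ((d + 1) * (k + 1)) d).symm.dvd
    rw [hw] at hz
    refine ⟨b ^ (2 ^ d * (2 ^ ((d + 1) * (k + 1)) - 1)) + critNum a b (d + 1) * (w ^ 2 * z),
      ?_, (isCoprime h d).pow_right.add_mul_left_right _⟩
    rw [show (d + 1) * (k + 1 + 1) = (d + 1) * (k + 1) + d + 1 by ring]
    linear_combination hz

theorem isSquare_or_isSquare_neg (h : IsCoprime a b) {d n : ℕ} (hd : d ≠ 0) (hdn : d ∣ n)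
    (hn : n ≠ 0) (hsq : IsSquare (critNum a b n)) :
    IsSquare (critNum a b d) ∨ IsSquare (-critNum a b d) := by
  obtain ⟨k, rfl⟩ := hdn
  obtain ⟨d, rfl⟩ := Nat.exists_eq_succ_of_ne_zero hd
  obtain ⟨k, rfl⟩ := Nat.exists_eq_succ_of_ne_zero (right_ne_zero_of_mul hn)
  obtain ⟨w, hw, hcop⟩ := exists_mul_eq h d k
  obtain ⟨t, ht⟩ := hsq
  obtain ⟨s, hs | hs⟩ := Int.sq_of_isCoprime hcop (by rw [← hw, ht, sq])
  · exact .inl (hs ▸ .sq s)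
  · exact .inr (by rw [hs, neg_neg]; exact .sq s)

end critNum

theorem isSquare_mul_sq_iff {K : Type*} [Field K] {x y : K} (hy : y ≠ 0) :
    IsSquare (x * y ^ 2) ↔ IsSquare x :=
  ⟨fun h => by simpa [hy] using h.div (.sq y), fun h => h.mul (.sq y)⟩

theorem critNum_num_den_eq (c : ℚ) (j : ℕ) :
    (critNum c.num c.den (j + 2) : ℚ) = critOrbit c (j + 2) * ((c.den : ℚ) ^ 2 ^ j) ^ 2 := by
  have hc : c * ((c.den : ℤ) : ℚ) = c.num := by exact_mod_cast Rat.mul_den_eq_num c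
  rw [show j + 2 = j + 1 + 1 from rfl, critNum.cast_eq hc, ← pow_mul, ← pow_succ,
    Int.cast_natCast]

theorem isSquare_critOrbit_iff (c : ℚ) (j : ℕ) :
    IsSquare (critOrbit c (j + 2)) ↔ IsSquare (critNum c.num c.den (j + 2)) := by
  rw [← Rat.isSquare_intCast_iff, critNum_num_den_eq, isSquare_mul_sq_iff (by positivity)]

theorem isSquare_neg_critOrbit_iff (c : ℚ) (j : ℕ) :
    IsSquare (-critOrbit c (j + 2)) ↔ IsSquare (-critNum c.num c.den (j + 2)) := by
  rw [← Rat.isSquare_intCast_iff, Int.cast_neg, critNum_num_den_eq, ← neg_mul,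
    isSquare_mul_sq_iff (by positivity)]

theorem isSquare_or_isSquare_neg_critOrbit_of_dvd (c : ℚ) {d n : ℕ} (hd : 2 ≤ d)
    (hdn : d ∣ n) (hn : n ≠ 0) (hsq : IsSquare (critOrbit c n)) :
    IsSquare (critOrbit c d) ∨ IsSquare (-critOrbit c d) := by
  obtain ⟨i, rfl⟩ := Nat.exists_eq_add_of_le' hd
  obtain ⟨j, rfl⟩ := Nat.exists_eq_add_of_le' (hd.trans (Nat.le_of_dvd (by omega) hdn))
  rw [isSquare_critOrbit_iff, isSquare_neg_critOrbit_iff]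
  rw [isSquare_critOrbit_iff] at hsq
  exact critNum.isSquare_or_isSquare_neg (Rat.isCoprime_num_den c) (by omega) hdn hn hsq

theorem stmt_8 (A : ℕ → ℚ → ℚ)
    (hA1 : ∀ c, A 1 c = c)
    (hArec : ∀ n ≥ 1, ∀ c, A (n + 1) c = (A n c) ^ 2 + c)
    (n m p : ℕ) (hn : n = 2 * m) (hm : Odd m) (hp : p.Prime) (hpm : p ∣ m)
    (c : ℚ) (hsq : IsSquare (A n c)) :
    (IsSquare (A p c) ∨ IsSquare (-(A p c))) ∧ IsSquare (c * (c + 1)) := by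
  have hA : ∀ k ≠ 0, A k c = critOrbit c k := fun k hk => by
    obtain ⟨k, rfl⟩ := Nat.exists_eq_succ_of_ne_zero hk
    exact eq_critOrbit hA1 hArec c k
  have hn0 : n ≠ 0 := by have := hm.pos; omega
  rw [hA n hn0] at hsq
  refine ⟨hA p hp.ne_zero ▸ isSquare_or_isSquare_neg_critOrbit_of_dvd c hp.two_le
    (hn ▸ hpm.mul_left 2) hn0 hsq, ?_⟩
  have hA2 : critOrbit c 2 = c * (c + 1) := by simp only [critOrbit]; ring
  rcases hA2 ▸ isSquare_or_isSquare_neg_critOrbit_of_dvd c le_rfl (hn ▸ dvd_mul_right 2 m) hn0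
    hsq with h | ⟨r, hr⟩
  · exact h
  · have : c * (c + 1) = 0 := by
      nlinarith [mul_self_nonneg r, mul_add_one_nonneg_of_critOrbit_nonneg hn0 hsq.nonneg]
    exact this ▸ .zero
end

section
/- Let R be the ring of integers of a finite unramified (more generally, with residue algebra a product of finite fields of characteristic 2) extension; concretely let R = ℤ₂[θ] where θ is a root of a monic f ∈ ℤ₂[x] with odd discriminant, so R/2R ≅ F₁ × ⋯ × F_m with each F_j a finite field of characteristic 2. For α ∈ R, the element 1 + 4α is a square in R if and only if Tr_{F_j/𝔽₂}(ᾱ_j) = 0 for all j, where ᾱ_j is the j-th component of the reduction of α mod 2. -/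
/-!
Writing a square root of `1 + 4α` as `1 + 2x` turns the question into solvability of the
Artin–Schreier equation `x² + x = α`. Such a root is necessarily `≡ 1 (mod 2)` because `R/2R` is
reduced, and `2` is a non-zero-divisor, so `IsSquare (1 + 4α) ↔ ∃ x, x² + x = α`. Since `R` is
free of finite rank over `ℤ₂` it is `2`-adically complete, hence Henselian, and the derivative
`2x + 1` is a unit mod `2`: the equation is solvable in `R` iff it is solvable in
`R/2R ≅ ∏ F_j`. In a finite field of characteristic `2`, `x² + x = a` is solvable iff `Tr a = 0`.
-/

open Polynomial

theorem CharTwo.sq_add_self_eq_zero_iff {R : Type*} [CommRing R] [CharP R 2] [NoZeroDivisors R]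
    {x : R} : x ^ 2 + x = 0 ↔ x = 0 ∨ x = 1 := by
  rw [show x ^ 2 + x = x * (x + 1) by ring, mul_eq_zero, CharTwo.add_eq_zero]

namespace FiniteField

variable {F : Type*} [Field F] [Finite F] [Algebra (ZMod 2) F]

theorem trace_sq (x : F) : Algebra.trace (ZMod 2) F (x ^ 2) = Algebra.trace (ZMod 2) F x :=
  Algebra.trace_eq_of_algEquiv (frobeniusAlgEquivOfAlgebraic (ZMod 2) F) x

/- Additive Hilbert 90: the `𝔽₂`-linear map `x ↦ x² + x` has kernel `𝔽₂`, so its image has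
codimension one, and it lies in the kernel of the (surjective) trace. -/
theorem trace_eq_zero_iff_exists_sq_add_self (a : F) :
    Algebra.trace (ZMod 2) F a = 0 ↔ ∃ x : F, x ^ 2 + x = a := by
  have : Module.Finite (ZMod 2) F := Module.Finite.of_finite
  have : CharP F 2 := charP_of_injective_algebraMap' (ZMod 2) 2
  let ψ : F →ₗ[ZMod 2] F := (frobeniusAlgHom (ZMod 2) F).toLinearMap + LinearMap.id
  have hψ (x : F) : ψ x = x ^ 2 + x := by simp [ψ, ZMod.card]
  have hle : LinearMap.range ψ ≤ LinearMap.ker (Algebra.trace (ZMod 2) F) := by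
    rintro _ ⟨x, rfl⟩
    rw [LinearMap.mem_ker, hψ, map_add, trace_sq, CharTwo.add_self_eq_zero]
  have hker : LinearMap.ker ψ ≤ Submodule.span (ZMod 2) {1} := by
    intro x hx
    rw [LinearMap.mem_ker, hψ, CharTwo.sq_add_self_eq_zero_iff] at hx
    rcases hx with rfl | rfl
    exacts [zero_mem _, Submodule.subset_span rfl]
  have hker_rank : Module.finrank (ZMod 2) (LinearMap.ker ψ) ≤ 1 :=
    (Submodule.finrank_mono hker).trans ((finrank_span_le_card _).trans (by simp))
  have htr_rank : Module.finrank (ZMod 2) (LinearMap.range (Algebra.trace (ZMod 2) F)) = 1 := by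
    rw [LinearMap.range_eq_top.mpr (Algebra.trace_surjective _ _), finrank_top,
      Module.finrank_self]
  have hψ_rank := ψ.finrank_range_add_finrank_ker
  have htr_ker_rank := (Algebra.trace (ZMod 2) F).finrank_range_add_finrank_ker
  have heq := Submodule.eq_of_le_of_finrank_le hle (by omega)
  rw [← LinearMap.mem_ker, ← heq]
  simp [hψ]

end FiniteField

namespace IsAdicComplete

open AdicCompletion

variable {R : Type*} [CommRing R] (I : Ideal R)

theorem of_linearEquiv {M N : Type*} [AddCommGroup M] [Module R M] [AddCommGroup N] [Module R N]
    (e : M ≃ₗ[R] N) [IsAdicComplete I M] : IsAdicComplete I N := by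
  rw [← of_bijective_iff]
  have h : ⇑(of I N) = congr I e ∘ of I M ∘ e.symm := by
    ext x
    simp [map_of]
  rw [h]
  exact (congr I e).bijective.comp ((of_bijective I M).comp e.symm.bijective)

instance pi {ι : Type*} [Finite ι] (M : ι → Type*) [∀ i, AddCommGroup (M i)]
    [∀ i, Module R (M i)] [∀ i, IsAdicComplete I (M i)] : IsAdicComplete I (∀ i, M i) := by
  classical
  have := Fintype.ofFinite ι
  rw [← of_bijective_iff]
  have h : ⇑(piEquivOfFintype I M) ∘ of I (∀ i, M i) = Pi.map fun i ↦ of I (M i) := by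
    ext x
    simp
  rw [← (piEquivOfFintype I M).bijective.of_comp_iff', h]
  exact Function.Bijective.piMap fun i ↦ of_bijective I (M i)

theorem map_algebraMap_of_basis {S ι : Type*} [CommRing S] [Algebra R S] [Finite ι]
    (b : Module.Basis ι R S) [IsAdicComplete I R] :
    IsAdicComplete (I.map (algebraMap R S)) S := by
  rw [map_algebraMap_iff]
  exact of_linearEquiv I b.equivFun.symm

end IsAdicComplete

section

variable {R : Type*} [CommRing R]

theorem isSquare_one_add_four_mul_iff [IsReduced (R ⧸ Ideal.span {(2 : R)})]
    (h2 : IsLeftRegular (2 : R)) (α : R) :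
    IsSquare (1 + 4 * α) ↔ ∃ x : R, x ^ 2 + x = α := by
  constructor
  · rintro ⟨y, hy⟩
    -- `(y - 1) ^ 2 = 2 * (1 + 2 * α - y)` vanishes in the reduced ring `R / 2R`
    have hy1 : y - 1 ∈ Ideal.span {(2 : R)} := by
      rw [← Ideal.Quotient.eq_zero_iff_mem]
      refine IsReduced.eq_zero _ ⟨2, ?_⟩
      rw [← map_pow, Ideal.Quotient.eq_zero_iff_mem, Ideal.mem_span_singleton']
      exact ⟨1 + 2 * α - y, by linear_combination hy⟩
    obtain ⟨x, hx⟩ := Ideal.mem_span_singleton'.mp hy1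
    exact ⟨x, h2.mul h2 (by linear_combination (x * 2 + y + 1) * hx - hy)⟩
  · rintro ⟨x, rfl⟩
    exact ⟨1 + 2 * x, by ring⟩

theorem HenselianRing.exists_sq_add_self_eq_iff {J : Ideal R} [HenselianRing R J]
    (h2 : (2 : R) ∈ J) (α : R) :
    (∃ x : R, x ^ 2 + x = α) ↔ ∃ x : R ⧸ J, x ^ 2 + x = Ideal.Quotient.mk J α := by
  constructor
  · rintro ⟨x, rfl⟩
    exact ⟨Ideal.Quotient.mk J x, by simp⟩
  · rintro ⟨x₀, hx₀⟩
    obtain ⟨x₀, rfl⟩ := Ideal.Quotient.mk_surjective x₀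
    have hmonic : (X ^ 2 + X - C α).Monic := by monicity!
    have h2J : Ideal.Quotient.mk J 2 = 0 := Ideal.Quotient.eq_zero_iff_mem.mpr h2
    obtain ⟨x, hx, -⟩ := HenselianRing.is_henselian (I := J) (X ^ 2 + X - C α) hmonic x₀
      (by rw [← Ideal.Quotient.eq_zero_iff_mem]; simpa [sub_eq_zero] using hx₀)
      (by simp [one_add_one_eq_two, h2J])
    exact ⟨x, by simpa [sub_eq_zero] using hx⟩

end

theorem exists_sq_add_self_eq_iff_of_ringEquiv {Q ι : Type*} {F : ι → Type*} [CommRing Q]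
    [∀ j, CommRing (F j)] (e : Q ≃+* ∀ j, F j) (a : Q) :
    (∃ x : Q, x ^ 2 + x = a) ↔ ∀ j, ∃ z : F j, z ^ 2 + z = e a j := by
  constructor
  · rintro ⟨x, rfl⟩ j
    exact ⟨e x j, by simp⟩
  · intro h
    choose z hz using h
    exact ⟨e.symm z, e.injective (by ext j; simpa using hz j)⟩

theorem AdjoinRoot.isLeftRegular_two {A : Type*} [CommRing A] [IsDomain A] [CharZero A]
    {f : A[X]} (hf : f.Monic) : IsLeftRegular (2 : AdjoinRoot f) := by
  have := Module.Free.of_basis (AdjoinRoot.powerBasis' hf).basis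
  intro a b h
  exact smul_right_injective (AdjoinRoot f) (two_ne_zero : (2 : A) ≠ 0)
    (by simpa only [two_smul, two_mul] using h)

theorem AdjoinRoot.isAdicComplete_span_two {f : ℤ_[2][X]} (hf : f.Monic) :
    IsAdicComplete (Ideal.span {(2 : AdjoinRoot f)}) (AdjoinRoot f) := by
  have := IsAdicComplete.map_algebraMap_of_basis (IsLocalRing.maximalIdeal ℤ_[2])
    (AdjoinRoot.powerBasis' hf).basis
  rwa [PadicInt.maximalIdeal_eq_span_p, Ideal.map_span, Set.image_singleton, map_natCast,
    Nat.cast_ofNat] at this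

theorem stmt_9_general (f : Polynomial ℤ_[2]) (hf : f.Monic)
    (m : ℕ) (F : Fin m → Type) [∀ j, Field (F j)] [∀ j, Fintype (F j)]
    [∀ j, Algebra (ZMod 2) (F j)]
    (e : (AdjoinRoot f ⧸ (Ideal.span ({2} : Set (AdjoinRoot f)))) ≃+* ∀ j, F j)
    (α : AdjoinRoot f) :
    IsSquare (1 + 4 * α) ↔
      ∀ j, Algebra.trace (ZMod 2) (F j) (e (Ideal.Quotient.mk _ α) j) = 0 := by
  have := AdjoinRoot.isAdicComplete_span_two hf
  have := isReduced_of_injective e e.injective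
  simp only [FiniteField.trace_eq_zero_iff_exists_sq_add_self]
  rw [isSquare_one_add_four_mul_iff (AdjoinRoot.isLeftRegular_two hf),
    HenselianRing.exists_sq_add_self_eq_iff (Ideal.mem_span_singleton_self 2),
    exists_sq_add_self_eq_iff_of_ringEquiv e]

theorem stmt_9 (f : Polynomial ℤ_[2]) (hf : f.Monic)
    (hsep : (f.map (PadicInt.toZMod (p := 2))).Separable)
    (m : ℕ) (F : Fin m → Type) [∀ j, Field (F j)] [∀ j, Fintype (F j)]
    [∀ j, Algebra (ZMod 2) (F j)]
    (e : (AdjoinRoot f ⧸ (Ideal.span ({2} : Set (AdjoinRoot f)))) ≃+* ∀ j, F j)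
    (α : AdjoinRoot f) :
    IsSquare (1 + 4 * α) ↔
      ∀ j, Algebra.trace (ZMod 2) (F j) (e (Ideal.Quotient.mk _ α) j) = 0 :=
  stmt_9_general f hf m F e α
end

section
/- Let f(x) = x^(2g+1) + h(x)^2 with h ∈ ℤ[x], deg h ≤ g, h(0) odd, and h(1) even. If a ∈ ℤ₂ is a 2-adic unit and f(a) is a square in ℤ₂, then a ≡ 1 - h(1)² (mod 8). -/
/-!
Everything happens modulo 8. Since `a` is odd, `a² ≡ 1`, so `a^(2g+1) ≡ a`; moreover
`h(a) ≡ h(1) (mod a - 1)` with `h(1)` and `a - 1` even, so `h(a)` is even. Odd squares are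
`≡ 1 (mod 8)`, hence `a ≡ 1 - h(a)² ≡ 1 (mod 4)`, which upgrades `h(a) ≡ h(1)` to mod 4 and so
`h(a)² ≡ h(1)² (mod 8)`.
-/

open Polynomial

theorem Polynomial.sub_intCast_dvd_aeval_sub {R : Type*} [CommRing R] (p : ℤ[X]) (a : R)
    (n : ℤ) : a - n ∣ aeval a p - ((p.eval n : ℤ) : R) := by
  simpa [aeval_def, eval₂_eq_eval_map, eval_intCast_map] using
    sub_dvd_eval_sub a (n : R) (p.map (Int.castRingHom R))

theorem PadicInt.pow_dvd_iff_toZModPow_eq_zero {p : ℕ} [Fact p.Prime] (n : ℕ) (x : ℤ_[p]) :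
    (p : ℤ_[p]) ^ n ∣ x ↔ toZModPow n x = 0 := by
  rw [← RingHom.mem_ker, ker_toZModPow, Ideal.mem_span_singleton]

namespace ZMod

theorem sq_eq_one_of_isUnit_eight {u : ZMod 8} (hu : IsUnit u) : u ^ 2 = 1 := by
  obtain ⟨w, hw⟩ := hu.exists_right_inv
  revert u w
  decide

theorem eq_one_sub_sq_of_add_sq_eq_sq_eight : ∀ u k c v : ZMod 8, u ^ 2 = 1 →
    u + (2 * k + (u - 1) * c) ^ 2 = v ^ 2 → u = 1 - (2 * k) ^ 2 := by
  decide

theorem eq_one_sub_sq_of_isSquare_aeval_eight (g : ℕ) (h : ℤ[X]) (h1 : Even (h.eval 1))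
    {u : ZMod 8} (hu : IsUnit u) (hsq : IsSquare (aeval u (X ^ (2 * g + 1) + h ^ 2))) :
    u = 1 - ((h.eval 1 : ℤ) : ZMod 8) ^ 2 := by
  have hu2 := sq_eq_one_of_isUnit_eight hu
  have hpow : u ^ (2 * g + 1) = u := by rw [pow_succ, pow_mul, hu2, one_pow, one_mul]
  obtain ⟨k, hk⟩ := h1.two_dvd
  obtain ⟨c, hc⟩ := h.sub_intCast_dvd_aeval_sub u 1
  have hval : aeval u h = 2 * (k : ZMod 8) + (u - 1) * c := by
    rw [← Int.cast_one, ← hc, hk]; push_cast; ring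
  obtain ⟨v, hv⟩ := hsq
  rw [map_add, map_pow, map_pow, aeval_X, hpow, hval, ← sq] at hv
  rw [eq_one_sub_sq_of_add_sq_eq_sq_eight u k c v hu2 hv, hk]
  push_cast
  ring

end ZMod

theorem stmt_12_general (g : ℕ) (h : Polynomial ℤ)
    (h1 : Even (h.eval 1))
    (f : Polynomial ℤ) (hf : f = X ^ (2 * g + 1) + h ^ 2)
    (a : ℤ_[2]) (ha : IsUnit a) (hsq : IsSquare (aeval a f)) :
    (8 : ℤ_[2]) ∣ (a - (1 - ((h.eval 1 : ℤ) : ℤ_[2]) ^ 2)) := by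
  let φ : ℤ_[2] →+* ZMod 8 := PadicInt.toZModPow 3
  have hsq8 : IsSquare (aeval (φ a) f) := by
    have := hsq.map φ.toIntAlgHom
    rwa [← aeval_algHom_apply] at this
  have hmod8 : φ a = 1 - ((h.eval 1 : ℤ) : ZMod 8) ^ 2 :=
    ZMod.eq_one_sub_sq_of_isSquare_aeval_eight g h h1 (ha.map φ) (hf ▸ hsq8)
  rw [show (8 : ℤ_[2]) = ((2 : ℕ) : ℤ_[2]) ^ 3 by norm_num,
    PadicInt.pow_dvd_iff_toZModPow_eq_zero]
  change φ _ = 0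
  simp [hmod8]

theorem stmt_12 (g : ℕ) (hg : 1 ≤ g) (h : Polynomial ℤ)
    (hdeg : h.natDegree ≤ g) (h0 : Odd (h.eval 0)) (h1 : Even (h.eval 1))
    (f : Polynomial ℤ) (hf : f = X ^ (2 * g + 1) + h ^ 2)
    (a : ℤ_[2]) (ha : IsUnit a) (hsq : IsSquare (aeval a f)) :
    (8 : ℤ_[2]) ∣ (a - (1 - ((h.eval 1 : ℤ) : ℤ_[2]) ^ 2)) :=
  stmt_12_general g h h1 f hf a ha hsq
end

section
/- Let f(x) = x^(2g+1) + h(x)^2 with h ∈ ℤ[x], deg h ≤ g, h(0) odd, h(1) even. Then f(1 - h(1)²) ≡ 1 (mod 8), and hence f(1 - h(1)²) is a square in ℤ₂; in particular there exists a point (a, b) ∈ ℤ₂² with b² = f(a) and a a 2-adic unit. -/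
/-!
Put `e = h(1)` (even) and `a = 1 - e²`, an odd integer. Then `a² ≡ 1 (mod 8)`, so
`a^(2g+1) ≡ a`, while `a - 1 = -e²` divides `h(a) - e`, so `h(a)² ≡ e² (mod 8)`.
Hence `f(a) ≡ a + e² = 1 (mod 8)`, and Hensel's lemma for `X² - f(a)` at `1` (where the
derivative has norm `1/2` and the value has norm at most `1/8`) makes `f(a)` a square in `ℤ₂`.
-/

open Polynomial

namespace PadicInt

theorem isUnit_intCast_of_not_dvd {p : ℕ} [Fact p.Prime] {k : ℤ} (hk : ¬ (p : ℤ) ∣ k) :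
    IsUnit (k : ℤ_[p]) :=
  isUnit_iff.mpr <| le_antisymm (norm_le_one _) <|
    not_lt.mp <| (norm_int_lt_one_iff_dvd k).not.mpr hk

theorem isSquare_of_norm_sub_one_le {u : ℤ_[2]} (hu : ‖u - 1‖ ≤ (2 : ℝ) ^ (-3 : ℤ)) :
    IsSquare u := by
  have hder : ‖(X ^ 2 - C u).derivative.eval 1‖ = 2⁻¹ := by
    simpa [one_add_one_eq_two] using norm_p (p := 2)
  have hval : ‖(X ^ 2 - C u).eval 1‖ < ‖(X ^ 2 - C u).derivative.eval 1‖ ^ 2 := by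
    rw [hder, eval_sub, eval_pow, eval_X, eval_C, one_pow, norm_sub_rev]
    exact hu.trans_lt (by norm_num)
  obtain ⟨z, hz, -⟩ := hensels_lemma hval
  exact ⟨z, (sub_eq_zero.mp (by simpa [sq] using hz)).symm⟩

theorem isSquare_intCast_of_modEq_one {u : ℤ} (hu : u ≡ 1 [ZMOD 8]) : IsSquare (u : ℤ_[2]) := by
  refine isSquare_of_norm_sub_one_le ?_
  have := (norm_int_le_pow_iff_dvd (p := 2) (k := u - 1) (n := 3)).mpr
    (by simpa using hu.symm.dvd)
  exact_mod_cast this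

end PadicInt

theorem Int.pow_two_mul_add_one_modEq_self_of_odd {a : ℤ} (ha : Odd a) (n : ℕ) :
    a ^ (2 * n + 1) ≡ a [ZMOD 8] := by
  have hsq : a ^ 2 ≡ 1 [ZMOD 8] :=
    (Int.modEq_iff_dvd.mpr (Int.eight_dvd_sq_sub_one_of_odd ha)).symm
  simpa [pow_succ, pow_mul] using (hsq.pow n).mul_right a

/-- With `e = h(1)` even, `h(1 - e²) ≡ e (mod e²)`, so `h(1 - e²)² ≡ e² (mod 2e³, e⁴)`. -/
theorem Polynomial.eval_one_sub_sq_sq_modEq {h : ℤ[X]} (he : Even (h.eval 1)) :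
    h.eval (1 - h.eval 1 ^ 2) ^ 2 ≡ h.eval 1 ^ 2 [ZMOD 8] := by
  have hdvd := sub_dvd_eval_sub (1 - h.eval 1 ^ 2) 1 h
  rw [sub_sub_cancel_left, neg_dvd] at hdvd
  obtain ⟨c, hc⟩ := hdvd
  generalize h.eval (1 - h.eval 1 ^ 2) = y at hc ⊢
  generalize h.eval 1 = e at he hc ⊢
  obtain ⟨m, rfl⟩ := he
  refine (Int.modEq_iff_dvd.mpr ⟨2 * m ^ 3 * c + 2 * m ^ 4 * c ^ 2, ?_⟩).symm
  rw [eq_add_of_sub_eq hc]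
  ring

theorem stmt_13_general (g : ℕ) (h : Polynomial ℤ)
    (h1 : Even (h.eval 1))
    (f : Polynomial ℤ) (hf : f = X ^ (2 * g + 1) + h ^ 2) :
    (8 : ℤ) ∣ (f.eval (1 - h.eval 1 ^ 2) - 1) ∧
    IsSquare ((f.eval (1 - h.eval 1 ^ 2) : ℤ) : ℤ_[2]) ∧
    ∃ a b : ℤ_[2], b ^ 2 = aeval a f ∧ IsUnit a := by
  set a := 1 - h.eval 1 ^ 2
  have ha : Odd a := by simpa [a, Int.odd_sub, parity_simps] using h1
  have hfa : f.eval a ≡ 1 [ZMOD 8] := by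
    have := (Int.pow_two_mul_add_one_modEq_self_of_odd ha g).add (eval_one_sub_sq_sq_modEq h1)
    simpa [hf, a] using this
  obtain ⟨b, hb⟩ := PadicInt.isSquare_intCast_of_modEq_one hfa
  refine ⟨Int.modEq_iff_dvd.mp hfa.symm, ⟨b, hb⟩, a, b, ?_,
    PadicInt.isUnit_intCast_of_not_dvd (by simpa [← even_iff_two_dvd] using ha)⟩
  have := aeval_algebraMap_apply_eq_algebraMap_eval (A := ℤ_[2]) a f
  rw [eq_intCast, eq_intCast, hb] at this
  rw [this, sq]

theorem stmt_13 (g : ℕ) (hg : 1 ≤ g) (h : Polynomial ℤ)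
    (hdeg : h.natDegree ≤ g) (h0 : Odd (h.eval 0)) (h1 : Even (h.eval 1))
    (f : Polynomial ℤ) (hf : f = X ^ (2 * g + 1) + h ^ 2) :
    (8 : ℤ) ∣ (f.eval (1 - h.eval 1 ^ 2) - 1) ∧
    IsSquare ((f.eval (1 - h.eval 1 ^ 2) : ℤ) : ℤ_[2]) ∧
    ∃ a b : ℤ_[2], b ^ 2 = aeval a f ∧ IsUnit a :=
  stmt_13_general g h h1 f hf
end

section
/- Define B_n ∈ ℤ[c] by B_n = ∏_{d|n} A_d^{μ(n/d)} where A_1 = c, A_{k+1} = A_k² + c. Then B_n(0) = 0 if n = 1 and B_n(0) = 1 if n > 1; B_n(-1) = -1 if n = 1, 0 if n = 2, and 1 if n > 2. -/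
/-!
Since `X ∣ A n`, the recurrence gives `A (n + 1) ≡ X [mod X ^ 2]`, so `A n = X * v` with
`v(0) = 1`. Likewise `A (2k + 4) - (X ^ 2 + X) = A (2k + 2) ^ 2 * (A (2k + 2) ^ 2 + 2X)` gives
`A (2k + 2) = (X ^ 2 + X) * q` with `q(-1) = 1`. Cancelling `B 1 = X` (and `B 2 = X + 1` when `n`
is even) from `A n = ∏_{d ∣ n} B d` shows that the `B d` with `1 < d ∣ n` multiply to `1` at `0`,
and those with `2 < d ∣ n` multiply to `1` at `-1` (for odd `n` directly from `A n (-1) = -1`).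
Strong induction on `n` then makes each of them equal to `1` there.
-/

open Polynomial

theorem eq_one_of_forall_prod_divisors_filter_lt_eq_one {M : Type*} [CommMonoid M] (k : ℕ)
    (b : ℕ → M) (h : ∀ n > k, ∏ d ∈ n.divisors with k < d, b d = 1) :
    ∀ n > k, b n = 1 := by
  intro n
  induction n using Nat.strong_induction_on with
  | _ n ih =>
    intro hn
    have hn_mem : n ∈ {d ∈ n.divisors | k < d} := by simp [hn, show n ≠ 0 by omega]
    have h_rest : ∏ d ∈ {d ∈ n.divisors | k < d}.erase n, b d = 1 := by
      refine Finset.prod_eq_one fun d hd => ?_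
      obtain ⟨hdn, ⟨hd_dvd, -⟩, hkd⟩ : d ≠ n ∧ (d ∣ n ∧ n ≠ 0) ∧ k < d := by simpa using hd
      exact ih d (lt_of_le_of_ne (Nat.le_of_dvd (by omega) hd_dvd) hdn) hkd
    simpa [← Finset.mul_prod_erase _ _ hn_mem, h_rest] using h n hn

theorem prod_divisors_eq_mul_prod_filter_lt {M : Type*} [CommMonoid M] (f : ℕ → M) (n k : ℕ) :
    ∏ d ∈ n.divisors, f d =
      (∏ d ∈ n.divisors with d ≤ k, f d) * ∏ d ∈ n.divisors with k < d, f d := by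
  simp_rw [← not_le]
  exact (Finset.prod_filter_mul_prod_filter_not _ _ _).symm

theorem Nat.divisors_filter_le_one {n : ℕ} (hn : n ≠ 0) : {d ∈ n.divisors | d ≤ 1} = {1} := by
  ext d
  simp only [Finset.mem_filter, Finset.mem_singleton]
  constructor
  · rintro ⟨hd, hd1⟩
    have := Nat.pos_of_mem_divisors hd
    omega
  · rintro rfl
    exact ⟨Nat.one_mem_divisors.mpr hn, le_rfl⟩

theorem Nat.divisors_filter_le_two {n : ℕ} (hn : n ≠ 0) (h2 : 2 ∣ n) :
    {d ∈ n.divisors | d ≤ 2} = {1, 2} := by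
  ext d
  simp only [Finset.mem_filter, Finset.mem_insert, Finset.mem_singleton]
  constructor
  · rintro ⟨hd, hd2⟩
    have := Nat.pos_of_mem_divisors hd
    omega
  · rintro (rfl | rfl)
    · exact ⟨Nat.one_mem_divisors.mpr hn, by norm_num⟩
    · exact ⟨Nat.mem_divisors.mpr ⟨h2, hn⟩, le_rfl⟩

theorem Nat.divisors_filter_one_lt_of_odd {n : ℕ} (hn : Odd n) :
    {d ∈ n.divisors | 1 < d} = {d ∈ n.divisors | 2 < d} := by
  refine Finset.filter_congr fun d hd => ⟨fun h1 => ?_, fun h2 => by omega⟩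
  have : d ≠ 2 := by
    rintro rfl
    exact (Nat.not_even_iff_odd.mpr hn) (even_iff_two_dvd.mpr (Nat.dvd_of_mem_divisors hd))
  omega

section Iterates

variable {A : ℕ → ℤ[X]}

theorem exists_eq_X_mul_eval_zero_eq_one (hA1 : A 1 = X)
    (hArec : ∀ n ≥ 1, A (n + 1) = A n ^ 2 + X) :
    ∀ n ≥ 1, ∃ v : ℤ[X], A n = X * v ∧ v.eval 0 = 1 := by
  refine Nat.le_induction ⟨1, by simp [hA1], by simp⟩ fun n hn ⟨v, hv, _⟩ => ?_
  exact ⟨X * v ^ 2 + 1, by rw [hArec n hn, hv]; ring, by simp⟩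

theorem exists_eq_X_sq_add_X_mul_eval_neg_one_eq_one (hA1 : A 1 = X)
    (hArec : ∀ n ≥ 1, A (n + 1) = A n ^ 2 + X) (k : ℕ) :
    ∃ q : ℤ[X], A (2 * k + 2) = (X ^ 2 + X) * q ∧ q.eval (-1) = 1 := by
  induction k with
  | zero => exact ⟨1, by simp [hArec 1 le_rfl, hA1, sq], by simp⟩
  | succ k ih =>
    obtain ⟨q, hq, -⟩ := ih
    refine ⟨(X ^ 2 + X) ^ 3 * q ^ 4 + 2 * (X ^ 2 + X) * X * q ^ 2 + 1, ?_, by simp⟩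
    rw [show 2 * (k + 1) + 2 = 2 * k + 2 + 1 + 1 by ring, hArec _ (by omega),
      hArec _ (by omega), hq]
    ring

theorem eval_neg_one_of_odd (hA1 : A 1 = X) (hArec : ∀ n ≥ 1, A (n + 1) = A n ^ 2 + X)
    {n : ℕ} (hn : Odd n) : (A n).eval (-1) = -1 := by
  obtain ⟨_ | k, rfl⟩ := hn
  · simp [hA1]
  · obtain ⟨q, hq, -⟩ := exists_eq_X_sq_add_X_mul_eval_neg_one_eq_one hA1 hArec k
    rw [show 2 * (k + 1) + 1 = 2 * k + 2 + 1 by ring, hArec _ (by omega), hq]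
    simp

end Iterates

section Factors

variable {A B : ℕ → ℤ[X]}

theorem B_one_eq_X (hA1 : A 1 = X) (hBprod : ∀ n ≥ 1, A n = ∏ d ∈ n.divisors, B d) :
    B 1 = X := by
  simpa [hA1] using (hBprod 1 le_rfl).symm

theorem B_two_eq_X_add_one (hA1 : A 1 = X) (hArec : ∀ n ≥ 1, A (n + 1) = A n ^ 2 + X)
    (hBprod : ∀ n ≥ 1, A n = ∏ d ∈ n.divisors, B d) : B 2 = X + 1 := by
  have h := hBprod 2 (by norm_num)
  rw [hArec 1 le_rfl, hA1, show (2 : ℕ).divisors = {1, 2} by decide,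
    Finset.prod_pair (by norm_num), B_one_eq_X hA1 hBprod] at h
  exact (mul_left_cancel₀ X_ne_zero (by linear_combination h)).symm

theorem prod_divisors_filter_one_lt_eval_zero (hA1 : A 1 = X)
    (hArec : ∀ n ≥ 1, A (n + 1) = A n ^ 2 + X)
    (hBprod : ∀ n ≥ 1, A n = ∏ d ∈ n.divisors, B d) (n : ℕ) (hn : 1 ≤ n) :
    ∏ d ∈ n.divisors with 1 < d, (B d).eval 0 = 1 := by
  obtain ⟨v, hv, hv0⟩ := exists_eq_X_mul_eval_zero_eq_one hA1 hArec n hn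
  have h := hBprod n hn
  rw [prod_divisors_eq_mul_prod_filter_lt _ _ 1, Nat.divisors_filter_le_one (by omega),
    Finset.prod_singleton, B_one_eq_X hA1 hBprod, hv] at h
  rw [← eval_prod, ← mul_left_cancel₀ X_ne_zero h, hv0]

theorem prod_divisors_filter_two_lt_eval_neg_one (hA1 : A 1 = X)
    (hArec : ∀ n ≥ 1, A (n + 1) = A n ^ 2 + X)
    (hBprod : ∀ n ≥ 1, A n = ∏ d ∈ n.divisors, B d) (n : ℕ) (hn : 1 ≤ n) :
    ∏ d ∈ n.divisors with 2 < d, (B d).eval (-1) = 1 := by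
  have h := hBprod n hn
  rcases Nat.even_or_odd n with ⟨k, rfl⟩ | hodd
  · obtain ⟨q, hq, hq1⟩ := exists_eq_X_sq_add_X_mul_eval_neg_one_eq_one hA1 hArec (k - 1)
    rw [show 2 * (k - 1) + 2 = k + k by omega] at hq
    rw [prod_divisors_eq_mul_prod_filter_lt _ _ 2,
      Nat.divisors_filter_le_two (by omega) ⟨k, by ring⟩, Finset.prod_pair (by norm_num),
      B_one_eq_X hA1 hBprod, B_two_eq_X_add_one hA1 hArec hBprod, hq] at h
    have hP : (X ^ 2 + X : ℤ[X]) ≠ 0 := fun h0 => by simpa using congrArg (eval 1) h0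
    have hq_eq : q = ∏ d ∈ (k + k).divisors with 2 < d, B d :=
      mul_left_cancel₀ hP (by linear_combination h)
    rw [← eval_prod, ← hq_eq, hq1]
  · have h_eval := congrArg (eval (-1)) h
    rw [prod_divisors_eq_mul_prod_filter_lt _ _ 1, Nat.divisors_filter_le_one (by omega),
      Finset.prod_singleton, B_one_eq_X hA1 hBprod, Nat.divisors_filter_one_lt_of_odd hodd,
      eval_neg_one_of_odd hA1 hArec hodd, eval_mul, eval_prod, eval_X] at h_eval
    linarith

end Factors

theorem stmt_17_general (A : ℕ → Polynomial ℤ)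
    (hA1 : A 1 = X)
    (hArec : ∀ n ≥ 1, A (n + 1) = (A n) ^ 2 + X)
    (B : ℕ → Polynomial ℤ)
    (hBprod : ∀ n ≥ 1, A n = ∏ d ∈ n.divisors, B d) :
    ((B 1).eval 0 = 0 ∧ ∀ n > 1, (B n).eval 0 = 1) ∧
    ((B 1).eval (-1) = -1 ∧ (B 2).eval (-1) = 0 ∧ ∀ n > 2, (B n).eval (-1) = 1) := by
  have hB1 := B_one_eq_X hA1 hBprod
  have hB2 := B_two_eq_X_add_one hA1 hArec hBprod
  refine ⟨⟨by simp [hB1], ?_⟩, by simp [hB1], by simp [hB2], ?_⟩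
  · exact eq_one_of_forall_prod_divisors_filter_lt_eq_one 1 _ fun n hn =>
      prod_divisors_filter_one_lt_eval_zero hA1 hArec hBprod n hn.le
  · exact eq_one_of_forall_prod_divisors_filter_lt_eq_one 2 _ fun n hn =>
      prod_divisors_filter_two_lt_eval_neg_one hA1 hArec hBprod n (by omega)

theorem stmt_17 (A : ℕ → Polynomial ℤ)
    (hA1 : A 1 = X)
    (hArec : ∀ n ≥ 1, A (n + 1) = (A n) ^ 2 + X)
    (B : ℕ → Polynomial ℤ)
    (hBmonic : ∀ n ≥ 1, (B n).Monic)
    (hBprod : ∀ n ≥ 1, A n = ∏ d ∈ n.divisors, B d) :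
    ((B 1).eval 0 = 0 ∧ ∀ n > 1, (B n).eval 0 = 1) ∧
    ((B 1).eval (-1) = -1 ∧ (B 2).eval (-1) = 0 ∧ ∀ n > 2, (B n).eval (-1) = 1) :=
  stmt_17_general A hA1 hArec B hBprod
end

section
/- Let n ≥ 2, let m ≥ 2 divide n with m even if n is even, and let B = ∏ B_d over divisors d of n not dividing m, as in the factorization A_n = A_m · B. Suppose B ∈ ℤ[c] is monic of even degree with B(0) = B(-1) = B(-2) = 1. Then for every c ∈ ℚ, B(c) is a nonzero square in ℚ₃ (the 3-adic numbers). -/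
/-!
Every element of `ℤ₃` that is `≡ 1 mod 3` is a square by Hensel's lemma, since `3` is odd.
For `z ∈ ℤ₃`, `B(z) mod 3` is `B` evaluated at one of the residues `0, -1, -2`, hence `1`.
For `|x| > 1`, `B(x) = x ^ deg B · B^rev(1/x)`; the first factor is a square as `deg B` is even,
and `B^rev(1/x) ≡ B^rev(0) = lead B = 1 mod 3`.
-/

open Polynomial

namespace PadicInt

variable {p : ℕ} [Fact p.Prime]

theorem toZMod_aeval (f : ℤ[X]) (z : ℤ_[p]) : toZMod (aeval z f) = aeval (toZMod z) f :=
  (aeval_algHom_apply toZMod.toIntAlgHom z f).symm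

theorem coe_aeval (f : ℤ[X]) (z : ℤ_[p]) :
    ((aeval z f : ℤ_[p]) : ℚ_[p]) = aeval (z : ℚ_[p]) f :=
  (aeval_algHom_apply (Coe.ringHom (p := p)).toIntAlgHom z f).symm

theorem norm_lt_one_iff_toZMod_eq_zero (z : ℤ_[p]) : ‖z‖ < 1 ↔ toZMod z = 0 := by
  rw [← mem_nonunits, ← IsLocalRing.mem_maximalIdeal, ← ker_toZMod, RingHom.mem_ker]

theorem isSquare_of_toZMod_eq_one (hp : p ≠ 2) {u : ℤ_[p]} (hu : toZMod u = 1) :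
    IsSquare u := by
  have hnorm_two : ‖(2 : ℤ_[p])‖ = 1 := by
    exact_mod_cast norm_natCast_eq_one_iff.mpr ((Nat.coprime_primes Fact.out Nat.prime_two).mpr hp)
  have hclose : ‖(X ^ 2 - C u : ℤ_[p][X]).aeval (1 : ℤ_[p])‖ <
      ‖(derivative (X ^ 2 - C u : ℤ_[p][X])).aeval (1 : ℤ_[p])‖ ^ 2 := by
    simp only [derivative_X_pow, derivative_C, map_sub, map_pow, aeval_X, aeval_C]
    simp [hnorm_two, norm_sub_rev, norm_lt_one_iff_toZMod_eq_zero, hu]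
  obtain ⟨s, hs, -⟩ := hensels_lemma hclose
  exact ⟨s, by simpa [sub_eq_zero, eq_comm, sq] using hs⟩

theorem coe_ne_zero_and_isSquare_of_toZMod_eq_one (hp : p ≠ 2) {u : ℤ_[p]} (hu : toZMod u = 1) :
    (u : ℚ_[p]) ≠ 0 ∧ IsSquare (u : ℚ_[p]) := by
  obtain ⟨s, rfl⟩ := isSquare_of_toZMod_eq_one hp hu
  refine ⟨?_, s, by push_cast; rfl⟩
  rintro h
  simp [coe_eq_zero.mp h] at hu

end PadicInt

theorem Polynomial.aeval_eq_pow_mul_aeval_inv_reverse {R K : Type*} [CommSemiring R] [Field K]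
    [Algebra R K] (f : R[X]) {x : K} (hx : x ≠ 0) :
    aeval x f = x ^ f.natDegree * aeval x⁻¹ f.reverse := by
  let := invertibleOfNonzero hx
  rw [aeval_def, aeval_def, ← eval₂_reverse_mul_pow, invOf_eq_inv, mul_comm]

open PadicInt in
theorem Padic.ne_zero_and_isSquare_aeval {p : ℕ} [Fact p.Prime] (hp : p ≠ 2) {B : ℤ[X]}
    (hmonic : B.Monic) (hdeg : Even B.natDegree) (hB : ∀ m : ZMod p, aeval m B = 1)
    (x : ℚ_[p]) : aeval x B ≠ 0 ∧ IsSquare (aeval x B) := by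
  by_cases hx : ‖x‖ ≤ 1
  · obtain ⟨z, rfl⟩ : ∃ z : ℤ_[p], (z : ℚ_[p]) = x := ⟨⟨x, hx⟩, rfl⟩
    rw [← coe_aeval]
    exact coe_ne_zero_and_isSquare_of_toZMod_eq_one hp (by rw [toZMod_aeval, hB])
  · have hx0 : x ≠ 0 := by rintro rfl; simp at hx
    have hinv : ‖x⁻¹‖ < 1 := by rw [norm_inv]; exact inv_lt_one_of_one_lt₀ (not_le.mp hx)
    obtain ⟨z, hz⟩ : ∃ z : ℤ_[p], (z : ℚ_[p]) = x⁻¹ := ⟨⟨x⁻¹, hinv.le⟩, rfl⟩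
    have hz0 : toZMod z = 0 := (norm_lt_one_iff_toZMod_eq_zero z).mp (by rwa [norm_def, hz])
    have hrev := coe_ne_zero_and_isSquare_of_toZMod_eq_one hp (u := aeval z B.reverse) (by
      rw [toZMod_aeval, hz0, ← coeff_zero_eq_aeval_zero', coeff_zero_reverse,
        hmonic.leadingCoeff, map_one])
    rw [aeval_eq_pow_mul_aeval_inv_reverse B hx0, ← hz, ← coe_aeval]
    exact ⟨mul_ne_zero (pow_ne_zero _ hx0) hrev.1, (hdeg.isSquare_pow x).mul hrev.2⟩

theorem stmt_18 (B : Polynomial ℤ)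
    (hmonic : B.Monic) (hdeg : Even B.natDegree)
    (h0 : B.eval 0 = 1) (h1 : B.eval (-1) = 1) (h2 : B.eval (-2) = 1) :
    ∀ c : ℚ, aeval ((c : ℚ_[3])) B ≠ 0 ∧ IsSquare (aeval ((c : ℚ_[3])) B) := by
  have hB : ∀ m : ZMod 3, aeval m B = 1 := by
    have hcover : ∀ m : ZMod 3, m = ((0 : ℤ) : ZMod 3) ∨ m = ((-1 : ℤ) : ZMod 3) ∨
        m = ((-2 : ℤ) : ZMod 3) := by decide
    intro m
    rcases hcover m with rfl | rfl | rfl <;>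
      rw [← eq_intCast (algebraMap ℤ (ZMod 3)), aeval_algebraMap_apply_eq_algebraMap_eval,
        ‹eval _ B = 1›, map_one]
  exact fun c => Padic.ne_zero_and_isSquare_aeval (by norm_num) hmonic hdeg hB c
end

section
/- Let n ≥ 2 and suppose f_c^(n-1) = f_c ∘ ⋯ ∘ f_c ((n-1)-fold iterate of f_c(x) = x² + c) is irreducible over ℚ and A_n(c) = f_c^n(0) is not a square in ℚ. Then f_c^n is irreducible over ℚ. -/
/-!
By Capelli's lemma, `f ∘ (X² + c)` is irreducible for irreducible monic `f` as soon as
`X² - (α - c)` is irreducible over `K(α)`, `α` a root of `f`, i.e. as soon as `α - c` is not a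
square in `K(α)`. Its norm is `(-1)^(deg f) f(c)`, so it suffices that this is not a square in `K`.
For `f = f_c^(n-1)`, of even degree `2^(n-1)`, this number is `f_c^(n-1)(c) = f_c^n(0)`.
-/

open Polynomial IntermediateField

theorem PowerBasis.norm_gen_sub_algebraMap {R S : Type*} [CommRing R] [Ring S] [Algebra R S]
    (pb : PowerBasis R S) (c : R) :
    Algebra.norm R (pb.gen - algebraMap R S c) = (-1) ^ pb.dim * (minpoly R pb.gen).eval c := by
  rw [Algebra.norm_eq_matrix_det pb.basis, ← charpoly_leftMulMatrix, Matrix.eval_charpoly,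
    ← neg_sub, map_neg, map_sub, AlgHom.commutes, Matrix.det_neg, Fintype.card_fin]
  rfl

theorem irreducible_X_sq_sub_C_of_not_isSquare_norm {K L : Type*} [CommRing K] [Field L]
    [Algebra K L] {a : L} (ha : ¬ IsSquare (Algebra.norm K a)) : Irreducible (X ^ 2 - C a) := by
  refine X_pow_sub_C_irreducible_of_prime Nat.prime_two fun b hb ↦ ha ?_
  rw [← hb, map_pow]
  exact IsSquare.sq _

theorem irreducible_comp_X_sq_add_C {K : Type*} [Field K] {f : K[X]} (hfm : f.Monic)
    (hf : Irreducible f) {c : K} (hc : ¬ IsSquare ((-1) ^ f.natDegree * f.eval c)) :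
    Irreducible (f.comp (X ^ 2 + C c)) := by
  refine irreducible_comp hfm (monic_X_pow_add_C c two_ne_zero) hf fun E _ _ x hx ↦ ?_
  have hxint : IsIntegral K x := by
    by_contra h
    exact hfm.ne_zero (hx ▸ minpoly.eq_zero h)
  have hnorm := (adjoin.powerBasis hxint).norm_gen_sub_algebraMap c
  rw [adjoin.powerBasis_gen, adjoin.powerBasis_dim, minpoly_gen, hx] at hnorm
  convert irreducible_X_sq_sub_C_of_not_isSquare_norm (hnorm ▸ hc) using 1
  simp only [Polynomial.map_add, Polynomial.map_pow, map_X, map_C, map_sub]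
  ring

section Iterates

variable {R : Type*} [CommSemiring R] {g : R[X]} {F : ℕ → R[X]}

theorem iterates_succ_eq_comp (hF0 : F 0 = X) (hFrec : ∀ k, F (k + 1) = g.comp (F k)) (k : ℕ) :
    F (k + 1) = (F k).comp g := by
  induction k with
  | zero => rw [hFrec, hF0, comp_X, X_comp]
  | succ k ih => rw [hFrec, ih, ← comp_assoc, ← hFrec, ih]

theorem iterates_monic (hF0 : F 0 = X) (hFrec : ∀ k, F (k + 1) = g.comp (F k)) (hg : g.Monic)
    (hg0 : g.natDegree ≠ 0) (k : ℕ) : (F k).Monic := by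
  induction k with
  | zero => exact hF0 ▸ monic_X
  | succ k ih => exact iterates_succ_eq_comp hF0 hFrec k ▸ ih.comp hg hg0

theorem iterates_natDegree [Nontrivial R] [NoZeroDivisors R] (hF0 : F 0 = X)
    (hFrec : ∀ k, F (k + 1) = g.comp (F k)) (k : ℕ) : (F k).natDegree = g.natDegree ^ k := by
  induction k with
  | zero => rw [hF0, natDegree_X, pow_zero]
  | succ k ih => rw [hFrec, natDegree_comp, ih, pow_succ']

end Iterates

theorem stmt_19 (c : ℚ) (F : ℕ → Polynomial ℚ)
    (hF0 : F 0 = X)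
    (hFrec : ∀ k, F (k + 1) = (X ^ 2 + C c).comp (F k))
    (n : ℕ) (hn : 2 ≤ n)
    (hirr : Irreducible (F (n - 1)))
    (hnsq : ¬ IsSquare ((F n).eval 0)) :
    Irreducible (F n) := by
  obtain ⟨m, rfl⟩ : ∃ m, n = m + 1 := ⟨n - 1, by omega⟩
  have hdeg : Even (F m).natDegree := by
    rw [iterates_natDegree hF0 hFrec, natDegree_X_pow_add_C]
    exact Nat.even_pow.mpr ⟨even_two, by omega⟩
  have hmonic := iterates_monic hF0 hFrec (monic_X_pow_add_C c two_ne_zero)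
    (by rw [natDegree_X_pow_add_C]; exact two_ne_zero) m
  rw [iterates_succ_eq_comp hF0 hFrec] at hnsq ⊢
  refine irreducible_comp_X_sq_add_C hmonic (by simpa using hirr) ?_
  simpa [hdeg.neg_one_pow] using hnsq
end
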